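/- arXiv:1502.05550 — 10 statements merged into one kernel-verified Lean document; each statement's English description precedes it below -/
import Mathlib

section
/- Let g ≥ 2 be an integer and let (a,b,c) ∈ D_g. Then a ≤ (g^186 − 2)/2. -/
/-- `N` is a repdigit in base `g` with at least two digits:
`N = d * (g^k - 1)/(g-1)` for some digit `1 ≤ d ≤ g-1` and some `k ≥ 2`. -/
def Repdigit (g N : ℕ) : Prop :=
  0 < N ∧ ∃ d k : ℕ, 1 ≤ d ∧ d ≤ g - 1 ∧ 2 ≤ k ∧ N * (g - 1) = d * (g ^ k - 1)

/-- The set of Diophantine triples with values in the repdigits in base `g`. -/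
def DioTriples (g : ℕ) : Set (ℕ × ℕ × ℕ) :=
  {p | 0 < p.2.2 ∧ p.2.2 < p.2.1 ∧ p.2.1 < p.1 ∧
    Repdigit g (p.1 * p.2.1 + 1) ∧ Repdigit g (p.1 * p.2.2 + 1) ∧
    Repdigit g (p.2.1 * p.2.2 + 1)}

set_option maxHeartbeats 1600000 in
theorem stmt_0 (g : ℕ) (hg : 2 ≤ g) (a b c : ℕ)
    (h : (a, b, c) ∈ DioTriples g) :
    a ≤ (g ^ 186 - 2) / 2 := by
  obtain ⟨hc, hcb, hba, H1, H2, H3⟩ := h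
  obtain ⟨-, d1, x, hd11, hd1g, hx2, e1⟩ := H1
  obtain ⟨-, d2, y, hd21, hd2g, hy2, e2⟩ := H2
  obtain ⟨-, d3, z, hd31, hd3g, hz2, e3⟩ := H3
  simp only at e1 e2 e3 hc hcb hba
  have hg1 : 1 ≤ g := by omega
  have hgx : 1 ≤ g ^ x := Nat.one_le_pow _ _ (by omega)
  have hgy : 1 ≤ g ^ y := Nat.one_le_pow _ _ (by omega)
  have hgz : 1 ≤ g ^ z := Nat.one_le_pow _ _ (by omega)
  zify [hg1, hgx, hgy, hgz] at e1 e2 e3 hd1g hd2g hd3g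
  have hG : (2:ℤ) ≤ (g:ℤ) := by exact_mod_cast hg
  have hC : (1:ℤ) ≤ (c:ℤ) := by exact_mod_cast hc
  have hCB : (c:ℤ) < (b:ℤ) := by exact_mod_cast hcb
  have hBA : (b:ℤ) < (a:ℤ) := by exact_mod_cast hba
  have hD1 : (1:ℤ) ≤ (d1:ℤ) := by exact_mod_cast hd11
  have hD2 : (1:ℤ) ≤ (d2:ℤ) := by exact_mod_cast hd21
  have hD3 : (1:ℤ) ≤ (d3:ℤ) := by exact_mod_cast hd31
  have hg1' : (1:ℤ) ≤ (g:ℤ) - 1 := by linarith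
  have hGpow : ∀ m n : ℕ, m ≤ n → (g:ℤ)^m ≤ (g:ℤ)^n := fun m n hmn =>
    pow_le_pow_right₀ (by linarith) hmn
  have hgx1 : (1:ℤ) ≤ (g:ℤ)^x := by exact_mod_cast hgx
  have hgy1 : (1:ℤ) ≤ (g:ℤ)^y := by exact_mod_cast hgy
  have hgz1 : (1:ℤ) ≤ (g:ℤ)^z := by exact_mod_cast hgz
  have hgsq : (4:ℤ) ≤ (g:ℤ)^2 := by
    have h4 : (2:ℤ)*2 ≤ (g:ℤ)*(g:ℤ) := mul_le_mul hG hG (by norm_num) (by linarith)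
    calc (4:ℤ) = 2*2 := by norm_num
    _ ≤ (g:ℤ)*(g:ℤ) := h4
    _ = (g:ℤ)^2 := by ring
  -- ordering of exponents
  have hyx : y ≤ x := by
    by_contra hcon
    have hle : (g:ℤ) * (g:ℤ)^x ≤ (g:ℤ)^y := by
      calc (g:ℤ) * (g:ℤ)^x = (g:ℤ)^(x+1) := by ring
      _ ≤ (g:ℤ)^y := hGpow (x+1) y (by omega)
    have A : (g:ℤ)^y - 1 ≤ (d2:ℤ)*((g:ℤ)^y-1) := by
      have := mul_nonneg (show (0:ℤ) ≤ (d2:ℤ) - 1 by linarith)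
        (show (0:ℤ) ≤ (g:ℤ)^y - 1 by linarith)
      linarith [this]
    have B : ((a:ℤ)*c+1)*((g:ℤ)-1) ≤ ((a:ℤ)*b+1)*((g:ℤ)-1) := by
      have h1 : (a:ℤ)*c ≤ (a:ℤ)*b :=
        mul_le_mul_of_nonneg_left (le_of_lt hCB) (show (0:ℤ) ≤ (a:ℤ) by linarith)
      exact mul_le_mul_of_nonneg_right (by linarith) (by linarith)
    have C : (d1:ℤ)*((g:ℤ)^x-1) ≤ ((g:ℤ)-1)*((g:ℤ)^x-1) :=
      mul_le_mul_of_nonneg_right hd1g (by linarith)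
    have D : ((g:ℤ)-1)*((g:ℤ)^x-1) = (g:ℤ)*(g:ℤ)^x - (g:ℤ)^x - (g:ℤ) + 1 := by ring
    linarith [e1, e2, A, B, C, D, hle, hgx1]
  have hzy : z ≤ y := by
    by_contra hcon
    have hle : (g:ℤ) * (g:ℤ)^y ≤ (g:ℤ)^z := by
      calc (g:ℤ) * (g:ℤ)^y = (g:ℤ)^(y+1) := by ring
      _ ≤ (g:ℤ)^z := hGpow (y+1) z (by omega)
    have A : (g:ℤ)^z - 1 ≤ (d3:ℤ)*((g:ℤ)^z-1) := by
      have := mul_nonneg (show (0:ℤ) ≤ (d3:ℤ) - 1 by linarith)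
        (show (0:ℤ) ≤ (g:ℤ)^z - 1 by linarith)
      linarith [this]
    have B : ((b:ℤ)*c+1)*((g:ℤ)-1) ≤ ((a:ℤ)*c+1)*((g:ℤ)-1) := by
      have h1 : (b:ℤ)*c ≤ (a:ℤ)*c :=
        mul_le_mul_of_nonneg_right (le_of_lt hBA) (show (0:ℤ) ≤ (c:ℤ) by linarith)
      exact mul_le_mul_of_nonneg_right (by linarith) (by linarith)
    have C : (d2:ℤ)*((g:ℤ)^y-1) ≤ ((g:ℤ)-1)*((g:ℤ)^y-1) :=
      mul_le_mul_of_nonneg_right hd2g (by linarith)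
    have D : ((g:ℤ)-1)*((g:ℤ)^y-1) = (g:ℤ)*(g:ℤ)^y - (g:ℤ)^y - (g:ℤ) + 1 := by ring
    linarith [e2, e3, A, B, C, D, hle, hgy1]
  obtain ⟨p, rfl⟩ : ∃ p, x = y + p := ⟨x - y, by omega⟩
  obtain ⟨q, rfl⟩ : ∃ q, y = z + q := ⟨y - z, by omega⟩
  have hgp1 : (1:ℤ) ≤ (g:ℤ)^p := one_le_pow₀ (by linarith)
  have hgq1 : (1:ℤ) ≤ (g:ℤ)^q := one_le_pow₀ (by linarith)
  -- the fundamental relation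
  have hR : (b:ℤ)*d2*(g:ℤ)^(z+q) - (c:ℤ)*d1*(g:ℤ)^(z+q+p)
      = ((b:ℤ)-c)*((g:ℤ)-1) + (b:ℤ)*d2 - (c:ℤ)*d1 := by
    linear_combination (c:ℤ)*e1 - (b:ℤ)*e2
  set R : ℤ := ((b:ℤ)-c)*((g:ℤ)-1) + (b:ℤ)*d2 - (c:ℤ)*d1 with hRdef
  have hdvdR : (g:ℤ)^(z+q) ∣ R :=
    ⟨(b:ℤ)*d2 - (c:ℤ)*d1*(g:ℤ)^p, by linear_combination -hR⟩
  have hRne : R ≠ 0 := by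
    intro h0
    have hzero : (g:ℤ)^(z+q) * ((b:ℤ)*d2 - (c:ℤ)*d1*(g:ℤ)^p) = 0 := by
      linear_combination hR + h0
    have hpowne : ((g:ℤ)^(z+q)) ≠ 0 := by positivity
    have hcan : (b:ℤ)*d2 = (c:ℤ)*d1*(g:ℤ)^p := by
      have := (mul_eq_zero.mp hzero).resolve_left hpowne
      linarith
    rw [hRdef] at h0
    have P1 : (0:ℤ) ≤ (c:ℤ)*d1*((g:ℤ)^p - 1) :=
      mul_nonneg (mul_nonneg (by linarith) (by linarith)) (by linarith)
    have P2 : (1:ℤ) ≤ ((b:ℤ)-c)*((g:ℤ)-1) := by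
      have := mul_le_mul (show (1:ℤ) ≤ (b:ℤ)-c by linarith) hg1' (by norm_num) (by linarith)
      linarith [this]
    linarith [h0, hcan, P1, P2]
  -- size bound on g^(z+q)
  have hzqB : (g:ℤ)^(z+q) ≤ 2*(b:ℤ)*((g:ℤ)-1) := by
    have h1 : (g:ℤ)^(z+q) ≤ |R| := Int.le_of_dvd (abs_pos.mpr hRne) ((dvd_abs _ _).mpr hdvdR)
    have h2 : |R| ≤ 2*(b:ℤ)*((g:ℤ)-1) := by
      have Q1 : (c:ℤ)*d1 ≤ (b:ℤ)*((g:ℤ)-1) :=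
        mul_le_mul (le_of_lt hCB) hd1g (by linarith) (by linarith)
      have Q2 : (0:ℤ) ≤ ((b:ℤ)-c)*((g:ℤ)-1) :=
        mul_nonneg (by linarith) (by linarith)
      have Q3 : (0:ℤ) ≤ (b:ℤ)*d2 := mul_nonneg (by linarith) (by linarith)
      have Q4 : (b:ℤ)*d2 ≤ (b:ℤ)*((g:ℤ)-1) :=
        mul_le_mul_of_nonneg_left hd2g (by linarith)
      have Q5 : ((b:ℤ)-c)*((g:ℤ)-1) ≤ (b:ℤ)*((g:ℤ)-1) :=
        mul_le_mul_of_nonneg_right (by linarith) (by linarith)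
      have Q6 : (0:ℤ) ≤ (c:ℤ)*d1 := mul_nonneg (by linarith) (by linarith)
      rw [abs_le]
      constructor
      · rw [hRdef]; linarith [Q1, Q2, Q3]
      · rw [hRdef]; linarith [Q4, Q5, Q6]
    linarith
  -- b ≤ g^z - 2
  have hN3 : (b:ℤ)*c + 1 ≤ (g:ℤ)^z - 1 := by
    by_contra hcon
    push_neg at hcon
    have H1 : (d3:ℤ)*((g:ℤ)^z-1) ≤ ((g:ℤ)-1)*((g:ℤ)^z-1) :=
      mul_le_mul_of_nonneg_right hd3g (by linarith)
    have H2 : ((g:ℤ)^z-1)*((g:ℤ)-1) < ((b:ℤ)*c+1)*((g:ℤ)-1) :=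
      mul_lt_mul_of_pos_right (by linarith) (by linarith)
    have H3 : ((g:ℤ)-1)*((g:ℤ)^z-1) = ((g:ℤ)^z-1)*((g:ℤ)-1) := by ring
    linarith [e3, H1, H2, H3]
  have hbB : (b:ℤ) ≤ (g:ℤ)^z - 2 := by
    have h1 : (b:ℤ)*1 ≤ (b:ℤ)*c := mul_le_mul_of_nonneg_left hC (by linarith)
    linarith [hN3, h1]
  -- c is small
  have hcB : (c:ℤ) ≤ 2*((g:ℤ)-1) - 1 := by
    by_contra hcon
    push_neg at hcon
    have h1 : (g:ℤ)^z ≤ (g:ℤ)^(z+q) := hGpow z (z+q) (by omega)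
    have h2 : (b:ℤ)*(2*((g:ℤ)-1)) ≤ (b:ℤ)*c :=
      mul_le_mul_of_nonneg_left (by linarith) (by linarith)
    linarith [hzqB, hN3, h1, h2]
  -- the key divisibility
  have E1 : ((a:ℤ)*b)*((g:ℤ)-1) = (d1:ℤ)*((g:ℤ)^(z+q+p)-1) - ((g:ℤ)-1) := by
    linear_combination e1
  have E2 : ((a:ℤ)*c)*((g:ℤ)-1) = (d2:ℤ)*((g:ℤ)^(z+q)-1) - ((g:ℤ)-1) := by
    linear_combination e2
  have E3 : ((b:ℤ)*c)*((g:ℤ)-1) = (d3:ℤ)*((g:ℤ)^z-1) - ((g:ℤ)-1) := by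
    linear_combination e3
  have key : (c:ℤ)^2*((d1:ℤ)*((g:ℤ)^(z+q+p)-1) - ((g:ℤ)-1))*((g:ℤ)-1)
      = ((d2:ℤ)*((g:ℤ)^(z+q)-1) - ((g:ℤ)-1))*((d3:ℤ)*((g:ℤ)^z-1) - ((g:ℤ)-1)) := by
    rw [← E1, ← E2, ← E3]; ring
  set M : ℤ := (d2:ℤ)*d3 + ((d2:ℤ)+d3)*((g:ℤ)-1) + ((g:ℤ)-1)^2
      + (c:ℤ)^2*((g:ℤ)-1)*((d1:ℤ) + ((g:ℤ)-1)) with hMdef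
  have hdvdM : (g:ℤ)^z ∣ M := by
    refine ⟨(c:ℤ)^2*((g:ℤ)-1)*d1*(g:ℤ)^(q+p) - (d2:ℤ)*d3*(g:ℤ)^(z+q)
      + (d2:ℤ)*d3*(g:ℤ)^q + (d2:ℤ)*d3 + ((g:ℤ)-1)*d2*(g:ℤ)^q + ((g:ℤ)-1)*d3, ?_⟩
    rw [hMdef]
    linear_combination -key
  have w1 : (1:ℤ) ≤ ((g:ℤ)-1)^2 := by
    have h4 : (1:ℤ)*1 ≤ ((g:ℤ)-1)*((g:ℤ)-1) := mul_le_mul hg1' hg1' (by norm_num) (by linarith)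
    calc (1:ℤ) = 1*1 := by norm_num
    _ ≤ ((g:ℤ)-1)*((g:ℤ)-1) := h4
    _ = ((g:ℤ)-1)^2 := by ring
  have hMpos : (0:ℤ) < M := by
    have V1 : (0:ℤ) ≤ (d2:ℤ)*d3 := mul_nonneg (by linarith) (by linarith)
    have V2 : (0:ℤ) ≤ ((d2:ℤ)+d3)*((g:ℤ)-1) := mul_nonneg (by linarith) (by linarith)
    have V3 : (0:ℤ) ≤ (c:ℤ)^2*((g:ℤ)-1)*((d1:ℤ) + ((g:ℤ)-1)) :=
      mul_nonneg (mul_nonneg (sq_nonneg _) (by linarith)) (by linarith)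
    rw [hMdef]; linarith [V1, V2, V3, w1]
  have hgzM : (g:ℤ)^z ≤ M := Int.le_of_dvd hMpos hdvdM
  have hMle : M ≤ 12*((g:ℤ)-1)^4 := by
    have t1 : (d2:ℤ)*d3 ≤ ((g:ℤ)-1)^2 := by
      have := mul_le_mul hd2g hd3g (by linarith) (by linarith)
      calc (d2:ℤ)*d3 ≤ ((g:ℤ)-1)*((g:ℤ)-1) := this
      _ = ((g:ℤ)-1)^2 := by ring
    have t2 : ((d2:ℤ)+d3)*((g:ℤ)-1) ≤ 2*((g:ℤ)-1)^2 := by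
      have := mul_le_mul_of_nonneg_right (show (d2:ℤ)+d3 ≤ 2*((g:ℤ)-1) by linarith)
        (show (0:ℤ) ≤ (g:ℤ)-1 by linarith)
      linarith [this]
    have t3 : (c:ℤ)^2 ≤ 4*((g:ℤ)-1)^2 := by
      have h4 : (c:ℤ)*c ≤ (2*((g:ℤ)-1))*(2*((g:ℤ)-1)) :=
        mul_le_mul (by linarith) (by linarith) (by linarith) (by linarith)
      calc (c:ℤ)^2 = (c:ℤ)*c := by ring
      _ ≤ (2*((g:ℤ)-1))*(2*((g:ℤ)-1)) := h4
      _ = 4*((g:ℤ)-1)^2 := by ring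
    have t5 : (c:ℤ)^2*((g:ℤ)-1)*((d1:ℤ) + ((g:ℤ)-1)) ≤ 8*((g:ℤ)-1)^4 := by
      have s1 : (c:ℤ)^2*((g:ℤ)-1) ≤ 4*((g:ℤ)-1)^2*((g:ℤ)-1) :=
        mul_le_mul_of_nonneg_right t3 (by linarith)
      have s2 : (d1:ℤ) + ((g:ℤ)-1) ≤ 2*((g:ℤ)-1) := by linarith
      have s3 : (c:ℤ)^2*((g:ℤ)-1)*((d1:ℤ) + ((g:ℤ)-1)) ≤ (4*((g:ℤ)-1)^2*((g:ℤ)-1))*(2*((g:ℤ)-1)) :=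
        mul_le_mul s1 s2 (by linarith) (by positivity)
      calc (c:ℤ)^2*((g:ℤ)-1)*((d1:ℤ) + ((g:ℤ)-1))
          ≤ (4*((g:ℤ)-1)^2*((g:ℤ)-1))*(2*((g:ℤ)-1)) := s3
      _ = 8*((g:ℤ)-1)^4 := by ring
    have t6 : ((g:ℤ)-1)^2 ≤ ((g:ℤ)-1)^4 := by
      have h4 : (0:ℤ) ≤ ((g:ℤ)-1)^2 * (((g:ℤ)-1)^2 - 1) :=
        mul_nonneg (sq_nonneg _) (by linarith [w1])
      have h5 : ((g:ℤ)-1)^2 * (((g:ℤ)-1)^2 - 1) = ((g:ℤ)-1)^4 - ((g:ℤ)-1)^2 := by ring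
      linarith [h4, h5]
    rw [hMdef]; linarith [t1, t2, t5, t6]
  -- z ≤ 7
  have hz7 : z ≤ 7 := by
    by_contra hcon
    have h8 : (g:ℤ)^8 ≤ (g:ℤ)^z := hGpow 8 z (by omega)
    have u1 : ((g:ℤ)-1)^4 ≤ (g:ℤ)^4 :=
      pow_le_pow_left₀ (show (0:ℤ) ≤ (g:ℤ)-1 by linarith) (show (g:ℤ)-1 ≤ (g:ℤ) by linarith) 4
    have u2 : (16:ℤ) ≤ (g:ℤ)^4 := by
      have := pow_le_pow_left₀ (show (0:ℤ) ≤ (2:ℤ) by norm_num) hG 4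
      norm_num at this; linarith
    have u3 : (0:ℤ) < ((g:ℤ)-1)^4 := by positivity
    have u4 : (0:ℤ) < (g:ℤ)^4 := by positivity
    have hlt : 12*((g:ℤ)-1)^4 < (g:ℤ)^8 := by
      calc 12*((g:ℤ)-1)^4 < (g:ℤ)^4 * ((g:ℤ)-1)^4 := by
            exact mul_lt_mul_of_pos_right (by linarith) u3
      _ ≤ (g:ℤ)^4 * (g:ℤ)^4 := mul_le_mul_of_nonneg_left u1 (le_of_lt u4)
      _ = (g:ℤ)^8 := by ring
    linarith [hgzM, hMle, h8, hlt]
  -- a generic exponent bound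
  have hexp : ∀ m : ℕ, (g:ℤ)^m ≤ 2*(b:ℤ)*((g:ℤ)-1) → m ≤ z+1 := by
    intro m hm
    by_contra hcon
    have h1 : (g:ℤ)^(z+2) ≤ (g:ℤ)^m := hGpow (z+2) m (by omega)
    have h2 : (g:ℤ)^(z+2) = (g:ℤ)^z * (g:ℤ) * (g:ℤ) := by ring
    have P1 : (0:ℤ) ≤ ((g:ℤ)^z - 1) * (((g:ℤ)-1)^2 + 1) :=
      mul_nonneg (by linarith) (by positivity)
    have P2 : 2*(b:ℤ)*((g:ℤ)-1) ≤ 2*((g:ℤ)^z-2)*((g:ℤ)-1) := by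
      have := mul_le_mul_of_nonneg_right (show 2*(b:ℤ) ≤ 2*((g:ℤ)^z-2) by linarith)
        (show (0:ℤ) ≤ (g:ℤ)-1 by linarith)
      linarith [this]
    have P3 : (4:ℤ) ≤ (g:ℤ)*(g:ℤ) := mul_le_mul hG hG (by norm_num) (by linarith)
    have E4 : 2*((g:ℤ)^z-2)*((g:ℤ)-1)
        = 2*((g:ℤ)^z*(g:ℤ)) - 2*(g:ℤ)^z - 4*(g:ℤ) + 4 := by ring
    have E5 : ((g:ℤ)^z - 1) * (((g:ℤ)-1)^2 + 1)
        = (g:ℤ)^z*(g:ℤ)*(g:ℤ) - 2*((g:ℤ)^z*(g:ℤ)) + 2*(g:ℤ)^z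
          - (g:ℤ)*(g:ℤ) + 2*(g:ℤ) - 2 := by ring
    linarith [hm, h1, h2, P1, P2, P3, E4, E5]
  have hq1 : z + q ≤ z + 1 := hexp (z+q) hzqB
  -- bound on p
  have hpB : (g:ℤ)^p ≤ 2*(b:ℤ)*((g:ℤ)-1) := by
    have hcd1 : (1:ℤ) ≤ (c:ℤ)*d1 := by
      have := mul_le_mul hC hD1 (by norm_num) (by linarith)
      linarith [this]
    have hRle : -R ≤ 2*(b:ℤ)*((g:ℤ)-1) := by
      have Q1 : (c:ℤ)*d1 ≤ (b:ℤ)*((g:ℤ)-1) :=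
        mul_le_mul (le_of_lt hCB) hd1g (by linarith) (by linarith)
      have Q2 : (0:ℤ) ≤ ((b:ℤ)-c)*((g:ℤ)-1) := mul_nonneg (by linarith) (by linarith)
      have Q3 : (0:ℤ) ≤ (b:ℤ)*d2 := mul_nonneg (by linarith) (by linarith)
      rw [hRdef]; linarith [Q1, Q2, Q3]
    have hbd2 : (b:ℤ)*d2*(g:ℤ)^(z+q) ≤ (b:ℤ)*((g:ℤ)-1)*(g:ℤ)^(z+q) := by
      have h0 : (b:ℤ)*d2 ≤ (b:ℤ)*((g:ℤ)-1) :=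
        mul_le_mul_of_nonneg_left hd2g (by linarith)
      exact mul_le_mul_of_nonneg_right h0 (by positivity)
    have hgzq2 : (2:ℤ) ≤ (g:ℤ)^(z+q) := by
      have h0 := hGpow 2 (z+q) (by omega)
      linarith [hgsq, h0]
    have hbg : (0:ℤ) ≤ (b:ℤ)*((g:ℤ)-1) := mul_nonneg (by linarith) (by linarith)
    have heq : (c:ℤ)*d1*(g:ℤ)^(z+q+p) = (b:ℤ)*d2*(g:ℤ)^(z+q) - R := by
      linear_combination -hR
    have h1 : (c:ℤ)*d1*(g:ℤ)^(z+q+p) ≤ 2*(b:ℤ)*((g:ℤ)-1)*(g:ℤ)^(z+q) := by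
      have h5 : (b:ℤ)*((g:ℤ)-1)*2 ≤ (b:ℤ)*((g:ℤ)-1)*(g:ℤ)^(z+q) :=
        mul_le_mul_of_nonneg_left hgzq2 hbg
      calc (c:ℤ)*d1*(g:ℤ)^(z+q+p) = (b:ℤ)*d2*(g:ℤ)^(z+q) - R := heq
      _ ≤ (b:ℤ)*((g:ℤ)-1)*(g:ℤ)^(z+q) + 2*(b:ℤ)*((g:ℤ)-1) := by linarith [hbd2, hRle]
      _ ≤ (b:ℤ)*((g:ℤ)-1)*(g:ℤ)^(z+q) + (b:ℤ)*((g:ℤ)-1)*(g:ℤ)^(z+q) := by linarith [h5]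
      _ = 2*(b:ℤ)*((g:ℤ)-1)*(g:ℤ)^(z+q) := by ring
    have h2 : (g:ℤ)^(z+q) * (g:ℤ)^p ≤ (g:ℤ)^(z+q) * (2*(b:ℤ)*((g:ℤ)-1)) := by
      have h3 : (g:ℤ)^(z+q+p) ≤ (c:ℤ)*d1*(g:ℤ)^(z+q+p) :=
        le_mul_of_one_le_left (by positivity) hcd1
      calc (g:ℤ)^(z+q) * (g:ℤ)^p = (g:ℤ)^(z+q+p) := by rw [← pow_add]
      _ ≤ (c:ℤ)*d1*(g:ℤ)^(z+q+p) := h3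
      _ ≤ 2*(b:ℤ)*((g:ℤ)-1)*(g:ℤ)^(z+q) := h1
      _ = (g:ℤ)^(z+q) * (2*(b:ℤ)*((g:ℤ)-1)) := by ring
    exact le_of_mul_le_mul_left h2 (by positivity)
  have hp1 : p ≤ z+1 := hexp p hpB
  -- x ≤ 186
  have hx186 : z + q + p ≤ 186 := by omega
  -- final bound
  have hN1 : (a:ℤ)*b + 1 ≤ (g:ℤ)^(z+q+p) - 1 := by
    by_contra hcon
    push_neg at hcon
    have H1 : (d1:ℤ)*((g:ℤ)^(z+q+p)-1) ≤ ((g:ℤ)-1)*((g:ℤ)^(z+q+p)-1) :=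
      mul_le_mul_of_nonneg_right hd1g (by linarith)
    have H2 : ((g:ℤ)^(z+q+p)-1)*((g:ℤ)-1) < ((a:ℤ)*b+1)*((g:ℤ)-1) :=
      mul_lt_mul_of_pos_right (by linarith) (by linarith)
    have H3 : ((g:ℤ)-1)*((g:ℤ)^(z+q+p)-1) = ((g:ℤ)^(z+q+p)-1)*((g:ℤ)-1) := by ring
    linarith [e1, H1, H2, H3]
  have h2a : (a:ℤ)*2 + 2 ≤ (g:ℤ)^(z+q+p) := by
    have h1 : (a:ℤ)*2 ≤ (a:ℤ)*b :=
      mul_le_mul_of_nonneg_left (show (2:ℤ) ≤ (b:ℤ) by linarith) (by linarith)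
    linarith [hN1, h1]
  have hfin : (a:ℤ)*2 + 2 ≤ (g:ℤ)^186 := by
    have := hGpow (z+q+p) 186 hx186
    linarith
  have hfinN : a*2 + 2 ≤ g^186 := by exact_mod_cast hfin
  have hfinN2 : a*2 ≤ g^186 - 2 := by omega
  exact (Nat.le_div_iff_mul_le (by norm_num)).mpr hfinN2
end

section
/- Let g ≥ 10^6 be an integer and let (a,b,c) ∈ D_g. Then a ≤ (g^124 − 2)/2. -/
/-!
Put `e = d + (g - 1)`, so that a repdigit `N = d (g^k - 1)/(g - 1)` satisfies
`(g - 1)(N - 1) = d g^k - e` with `g ≤ e ≤ 2g`. Let `ab + 1`, `ac + 1`, `bc + 1` have `K ≥ L ≥ M`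
digits and write `K = L + s`. The integer `j = c d₁ g^s - b d₂` satisfies `j g^L = c e₁ - b e₂` and
`j (g - 1) a = d₂ e₁ - d₁ e₂ g^s`. It is nonzero (otherwise `d₂ e₁ = d₁ e₂ g^s`, forcing `s = 0`,
`d₁ = d₂` and `b = c`), so the first identity gives `|j| < 2g` and `L ≤ M + 1`. Reducing
`j² (g - 1) · (g - 1)ab · (g - 1)ac = (g - 1)bc · (j (g - 1) a)²` modulo `g^M` shows that `g^M`
divides `j² (g - 1) e₁ e₂ + e₃ (d₂ e₁ - d₁ e₂ g^s)²`. If `s ≤ 5` this is a positive number below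
`g^16`; if `s ≥ 6`, modulo `g^6` it is congruent to the positive number
`j² (g - 1) e₁ e₂ + e₃ (d₂ e₁)² < g^6`. Hence `M ≤ 15` and `a < g^L ≤ g^16`.
-/

section

variable {g : ℤ}

theorem pow_pred_le_of_mul_sub_one_eq {N d : ℤ} {k : ℕ} (hg : 1 < g) (hd : 1 ≤ d) (hk : 1 ≤ k)
    (h : (g - 1) * N = d * (g ^ k - 1)) : g ^ (k - 1) ≤ N := by
  have hgk : g ^ k = g * g ^ (k - 1) := by rw [← pow_succ']; congr 1; omega
  have h1 : 1 ≤ g ^ (k - 1) := one_le_pow₀ hg.le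
  have h2 : 1 ≤ g ^ k := one_le_pow₀ hg.le
  refine le_of_mul_le_mul_left ?_ (sub_pos.2 hg)
  nlinarith [mul_le_mul_of_nonneg_right hd (by linarith : (0 : ℤ) ≤ g ^ k - 1)]

theorem lt_pow_of_mul_sub_one_eq {N d : ℤ} {k : ℕ} (hg : 1 < g) (hd : d ≤ g - 1)
    (h : (g - 1) * N = d * (g ^ k - 1)) : N < g ^ k := by
  have h1 : 1 ≤ g ^ k := one_le_pow₀ hg.le
  refine lt_of_mul_lt_mul_left ?_ (sub_pos.2 hg).le
  nlinarith [mul_le_mul_of_nonneg_right hd (by linarith : (0 : ℤ) ≤ g ^ k - 1)]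

theorem exponent_le_of_lt {N N' d d' : ℤ} {k k' : ℕ} (hg : 1 < g) (hd : 1 ≤ d) (hk : 1 ≤ k)
    (hd' : d' ≤ g - 1) (h : (g - 1) * N = d * (g ^ k - 1))
    (h' : (g - 1) * N' = d' * (g ^ k' - 1)) (hN : N < N') : k ≤ k' := by
  have := (pow_lt_pow_iff_right₀ hg).1 <| (pow_pred_le_of_mul_sub_one_eq hg hd hk h).trans_lt
    (hN.trans (lt_pow_of_mul_sub_one_eq hg hd' h'))
  omega

theorem exponent_eq_zero_and_eq_of_mul_eq {d₁ d₂ : ℤ} {s : ℕ} (hg : 1 < g) (hd₁ : 1 ≤ d₁)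
    (hd₁' : d₁ ≤ g - 1) (hd₂ : 1 ≤ d₂) (hd₂' : d₂ ≤ g - 1)
    (h : d₂ * (d₁ + (g - 1)) = d₁ * (d₂ + (g - 1)) * g ^ s) : s = 0 ∧ d₁ = d₂ := by
  rcases Nat.eq_zero_or_pos s with rfl | hs
  · refine ⟨rfl, ?_⟩
    have : (g - 1) * (d₁ - d₂) = 0 := by linear_combination -h
    rcases mul_eq_zero.1 this with h0 | h0 <;> linarith
  · have hgs : g ≤ g ^ s := le_self_pow₀ hg.le hs.ne'
    rcases eq_or_lt_of_le hd₁ with rfl | hd₁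
    · nlinarith [mul_le_mul_of_nonneg_left hgs (by linarith : (0 : ℤ) ≤ d₂ + (g - 1))]
    · have hl : d₂ * (d₁ + (g - 1)) ≤ (g - 1) * (2 * g - 2) := by
        apply mul_le_mul <;> linarith
      have hr : 2 * g ≤ d₁ * (d₂ + (g - 1)) := by nlinarith
      nlinarith [mul_le_mul hr hgs (by linarith) (by linarith)]

theorem dvd_add_of_mul_eq {n X Y Z e₁ e₂ e₃ u w : ℤ} (hX : n ∣ X + e₁) (hY : n ∣ Y + e₂)
    (hZ : n ∣ Z + e₃) (h : u * X * Y = Z * w) : n ∣ u * e₁ * e₂ + e₃ * w := by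
  have hX' : -X ≡ e₁ [ZMOD n] := Int.modEq_iff_dvd.2 (by simpa [add_comm] using hX)
  have hY' : -Y ≡ e₂ [ZMOD n] := Int.modEq_iff_dvd.2 (by simpa [add_comm] using hY)
  have hZ' : -Z ≡ e₃ [ZMOD n] := Int.modEq_iff_dvd.2 (by simpa [add_comm] using hZ)
  have : 0 ≡ u * e₁ * e₂ + e₃ * w [ZMOD n] :=
    calc 0 = u * -X * -Y + -Z * w := by linear_combination -h
      _ ≡ u * e₁ * e₂ + e₃ * w [ZMOD n] := by gcongr
  simpa using this.dvd

theorem le_fifteen_of_pow_dvd {d₁ d₂ e₁ e₂ e₃ j : ℤ} {M s : ℕ} (hg : 25 ≤ g)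
    (hd₁ : 0 ≤ d₁) (hd₁' : d₁ ≤ g) (hd₂ : 0 < d₂) (hd₂' : d₂ ≤ g)
    (he₁ : 0 < e₁) (he₁' : e₁ ≤ 2 * g) (he₂ : 0 < e₂) (he₂' : e₂ ≤ 2 * g)
    (he₃ : 0 < e₃) (he₃' : e₃ ≤ 2 * g) (hj : j ≠ 0) (hj' : |j| < 2 * g)
    (h : g ^ M ∣ j ^ 2 * (g - 1) * e₁ * e₂ + e₃ * (d₂ * e₁ - d₁ * e₂ * g ^ s) ^ 2) :
    M ≤ 15 := by
  have hg1 : 0 < g - 1 := by linarith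
  have hT : 0 < j ^ 2 * (g - 1) * e₁ * e₂ := by positivity
  have hT' : j ^ 2 * (g - 1) * e₁ * e₂ ≤ 16 * g ^ 5 :=
    calc _ ≤ (2 * g) ^ 2 * g * (2 * g) * (2 * g) := by
          have : j ^ 2 ≤ (2 * g) ^ 2 := by rw [← sq_abs]; gcongr
          gcongr; linarith
      _ = 16 * g ^ 5 := by ring
  by_contra! hM
  rcases le_or_gt 6 s with hs | hs
  · have hdvd : g ^ 6 ∣ j ^ 2 * (g - 1) * e₁ * e₂ + e₃ * (d₂ * e₁) ^ 2 := by
      rw [show j ^ 2 * (g - 1) * e₁ * e₂ + e₃ * (d₂ * e₁) ^ 2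
          = j ^ 2 * (g - 1) * e₁ * e₂ + e₃ * (d₂ * e₁ - d₁ * e₂ * g ^ s) ^ 2
            - g ^ s * (e₃ * d₁ * e₂ * (d₁ * e₂ * g ^ s - 2 * d₂ * e₁)) by ring]
      exact dvd_sub ((pow_dvd_pow g (by omega)).trans h)
        (dvd_mul_of_dvd_left (pow_dvd_pow g hs) _)
    have hlt : j ^ 2 * (g - 1) * e₁ * e₂ + e₃ * (d₂ * e₁) ^ 2 < g ^ 6 := by
      have : e₃ * (d₂ * e₁) ^ 2 ≤ 2 * g * (g * (2 * g)) ^ 2 := by gcongr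
      nlinarith [pow_pos (by linarith : 0 < g) 5]
    exact (Int.le_of_dvd (by positivity) hdvd).not_gt hlt
  · have hdvd := (pow_dvd_pow g hM).trans h
    have hlt : j ^ 2 * (g - 1) * e₁ * e₂ + e₃ * (d₂ * e₁ - d₁ * e₂ * g ^ s) ^ 2 < g ^ 16 := by
      have hgs : g ^ s ≤ g ^ 5 := pow_le_pow_right₀ (by linarith) (by omega)
      have hx : |d₂ * e₁ - d₁ * e₂ * g ^ s| ≤ g * (2 * g) * g ^ 5 := by
        refine abs_sub_le_of_nonneg_of_le (by positivity) ?_ (by positivity) (by gcongr)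
        calc d₂ * e₁ = d₂ * e₁ * 1 := (mul_one _).symm
          _ ≤ g * (2 * g) * g ^ 5 := by gcongr; exact one_le_pow₀ (by linarith)
      have : e₃ * (d₂ * e₁ - d₁ * e₂ * g ^ s) ^ 2 ≤ 2 * g * (g * (2 * g) * g ^ 5) ^ 2 := by
        rw [← sq_abs]; gcongr
      have h5 : g ^ 5 ≤ g ^ 15 := pow_le_pow_right₀ (by linarith) (by norm_num)
      nlinarith [pow_pos (by linarith : 0 < g) 15]
    exact (Int.le_of_dvd (by positivity) hdvd).not_gt hlt

theorem exists_small_multiplier {a b c d₁ d₂ : ℤ} {L M s : ℕ} (hg : 2 < g)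
    (hc : 0 < c) (hcb : c < b) (hb : b < g ^ M) (hML : M ≤ L)
    (hd₁ : 1 ≤ d₁) (hd₁' : d₁ ≤ g - 1) (hd₂ : 1 ≤ d₂) (hd₂' : d₂ ≤ g - 1)
    (h₁ : (g - 1) * (a * b + 1) = d₁ * (g ^ (L + s) - 1))
    (h₂ : (g - 1) * (a * c + 1) = d₂ * (g ^ L - 1)) :
    L ≤ M + 1 ∧ ∃ j : ℤ, j ≠ 0 ∧ |j| < 2 * g ∧
      j * ((g - 1) * a) = d₂ * (d₁ + (g - 1)) - d₁ * (d₂ + (g - 1)) * g ^ s := by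
  have hg1 : 1 < g := by linarith
  obtain ⟨j, hj⟩ : ∃ j, j = c * d₁ * g ^ s - b * d₂ := ⟨_, rfl⟩
  have hjL : j * g ^ L = c * (d₁ + (g - 1)) - b * (d₂ + (g - 1)) := by
    linear_combination b * h₂ - c * h₁ + g ^ L * hj
  have hja : j * ((g - 1) * a) = d₂ * (d₁ + (g - 1)) - d₁ * (d₂ + (g - 1)) * g ^ s := by
    linear_combination d₁ * g ^ s * h₂ - d₂ * h₁ + (g - 1) * a * hj
  have hj0 : j ≠ 0 := by
    intro hj0
    obtain ⟨rfl, rfl⟩ := exponent_eq_zero_and_eq_of_mul_eq hg1 hd₁ hd₁' hd₂ hd₂'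
      (by linear_combination -hja + (g - 1) * a * hj0)
    rw [pow_zero, mul_one] at hj
    nlinarith
  have hjg : |j| * g ^ L < 2 * g * g ^ M := by
    rw [← abs_of_pos (pow_pos (by linarith) L : 0 < g ^ L), ← abs_mul, hjL]
    apply abs_sub_lt_of_nonneg_of_lt <;> nlinarith
  refine ⟨?_, j, hj0, ?_, hja⟩
  · have : g ^ L < g ^ (M + 2) :=
      calc g ^ L ≤ |j| * g ^ L := le_mul_of_one_le_left (by positivity) (Int.one_le_abs hj0)
        _ < 2 * g * g ^ M := hjg
        _ ≤ g ^ 2 * g ^ M := by gcongr; nlinarith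
        _ = g ^ (M + 2) := by ring
    have := (pow_lt_pow_iff_right₀ hg1).1 this
    omega
  · refine lt_of_mul_lt_mul_right (hjg.trans_le ?_) (pow_nonneg (by linarith) L)
    gcongr; linarith

theorem le_fifteen_of_mul_sub_one_eq {a b c d₁ d₂ d₃ j : ℤ} {L M s : ℕ} (hg : 25 ≤ g)
    (hML : M ≤ L) (hd₁ : 1 ≤ d₁) (hd₁' : d₁ ≤ g - 1) (hd₂ : 1 ≤ d₂) (hd₂' : d₂ ≤ g - 1)
    (hd₃ : 1 ≤ d₃) (hd₃' : d₃ ≤ g - 1)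
    (h₁ : (g - 1) * (a * b + 1) = d₁ * (g ^ (L + s) - 1))
    (h₂ : (g - 1) * (a * c + 1) = d₂ * (g ^ L - 1))
    (h₃ : (g - 1) * (b * c + 1) = d₃ * (g ^ M - 1))
    (hj0 : j ≠ 0) (hj : |j| < 2 * g)
    (hja : j * ((g - 1) * a) = d₂ * (d₁ + (g - 1)) - d₁ * (d₂ + (g - 1)) * g ^ s) : M ≤ 15 := by
  have hX : g ^ M ∣ (g - 1) * (a * b) + (d₁ + (g - 1)) := by
    rw [show (g - 1) * (a * b) + (d₁ + (g - 1)) = d₁ * g ^ (L + s) by linear_combination h₁]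
    exact (pow_dvd_pow g (by omega)).mul_left _
  have hY : g ^ M ∣ (g - 1) * (a * c) + (d₂ + (g - 1)) := by
    rw [show (g - 1) * (a * c) + (d₂ + (g - 1)) = d₂ * g ^ L by linear_combination h₂]
    exact (pow_dvd_pow g hML).mul_left _
  have hZ : g ^ M ∣ (g - 1) * (b * c) + (d₃ + (g - 1)) := by
    rw [show (g - 1) * (b * c) + (d₃ + (g - 1)) = d₃ * g ^ M by linear_combination h₃]
    exact dvd_mul_left _ _
  have hXYZ : j ^ 2 * (g - 1) * ((g - 1) * (a * b)) * ((g - 1) * (a * c))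
      = (g - 1) * (b * c) * (d₂ * (d₁ + (g - 1)) - d₁ * (d₂ + (g - 1)) * g ^ s) ^ 2 := by
    rw [← hja]; ring
  exact le_fifteen_of_pow_dvd hg (by linarith) (by linarith) (by linarith) (by linarith)
    (by linarith) (by linarith) (by linarith) (by linarith) (by linarith) (by linarith) hj0 hj
    (dvd_add_of_mul_eq hX hY hZ hXYZ)

theorem lt_pow_sixteen_of_mul_sub_one_eq {a b c d₁ d₂ d₃ : ℤ} {K L M : ℕ} (hg : 25 ≤ g)
    (hc : 0 < c) (hcb : c < b) (hba : b < a)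
    (hd₁ : 1 ≤ d₁) (hd₁' : d₁ ≤ g - 1) (hd₂ : 1 ≤ d₂) (hd₂' : d₂ ≤ g - 1)
    (hd₃ : 1 ≤ d₃) (hd₃' : d₃ ≤ g - 1) (hL : 1 ≤ L) (hM : 1 ≤ M)
    (h₁ : (g - 1) * (a * b + 1) = d₁ * (g ^ K - 1))
    (h₂ : (g - 1) * (a * c + 1) = d₂ * (g ^ L - 1))
    (h₃ : (g - 1) * (b * c + 1) = d₃ * (g ^ M - 1)) : a < g ^ 16 := by
  have hg1 : 1 < g := by linarith
  have hLK : L ≤ K := exponent_le_of_lt hg1 hd₂ hL hd₁' h₂ h₁ (by gcongr; linarith)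
  have hML : M ≤ L := exponent_le_of_lt hg1 hd₃ hM hd₂' h₃ h₂ (by gcongr)
  obtain ⟨s, rfl⟩ := Nat.exists_eq_add_of_le hLK
  have hb : b < g ^ M := by nlinarith [lt_pow_of_mul_sub_one_eq hg1 hd₃' h₃]
  obtain ⟨hLM, j, hj0, hj, hja⟩ :=
    exists_small_multiplier (by linarith) hc hcb hb hML hd₁ hd₁' hd₂ hd₂' h₁ h₂
  have hM : M ≤ 15 :=
    le_fifteen_of_mul_sub_one_eq hg hML hd₁ hd₁' hd₂ hd₂' hd₃ hd₃' h₁ h₂ h₃ hj0 hj hja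
  calc a ≤ a * c := le_mul_of_one_le_right (by linarith) hc
    _ < a * c + 1 := lt_add_one _
    _ < g ^ L := lt_pow_of_mul_sub_one_eq hg1 hd₂' h₂
    _ ≤ g ^ 16 := pow_le_pow_right₀ hg1.le (by omega)

end

theorem Repdigit.exists_int_eq {g N : ℕ} (h : Repdigit g N) :
    ∃ (d : ℤ) (k : ℕ), 1 ≤ d ∧ d ≤ g - 1 ∧ 2 ≤ k ∧ ((g : ℤ) - 1) * N = d * (g ^ k - 1) := by
  obtain ⟨-, d, k, hd, hd', hk, h⟩ := h
  have hg : 1 ≤ g := by omega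
  refine ⟨d, k, by exact_mod_cast hd, by omega, hk, ?_⟩
  have := congrArg (Nat.cast : ℕ → ℤ) h
  push_cast [Nat.cast_sub hg, Nat.cast_sub (Nat.one_le_pow k g hg)] at this
  linear_combination this

theorem stmt_1 (g : ℕ) (hg : 10 ^ 6 ≤ g) (a b c : ℕ)
    (h : (a, b, c) ∈ DioTriples g) :
    a ≤ (g ^ 124 - 2) / 2 := by
  obtain ⟨hc, hcb, hba, h₁, h₂, h₃⟩ := h
  obtain ⟨d₁, K, hd₁, hd₁', -, h₁⟩ := h₁.exists_int_eq
  obtain ⟨d₂, L, hd₂, hd₂', hL, h₂⟩ := h₂.exists_int_eq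
  obtain ⟨d₃, M, hd₃, hd₃', hM, h₃⟩ := h₃.exists_int_eq
  push_cast at h₁ h₂ h₃
  have ha : a < g ^ 16 := by
    exact_mod_cast lt_pow_sixteen_of_mul_sub_one_eq (by norm_num at hg ⊢; omega)
      (by exact_mod_cast hc) (by exact_mod_cast hcb) (by exact_mod_cast hba)
      hd₁ hd₁' hd₂ hd₂' hd₃ hd₃' (by omega) (by omega) h₁ h₂ h₃
  have hpow : 2 * g ^ 16 ≤ g ^ 124 :=
    calc 2 * g ^ 16 ≤ g * g ^ 16 := by gcongr; omega
      _ = g ^ 17 := by ring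
      _ ≤ g ^ 124 := Nat.pow_le_pow_right (by omega) (by norm_num)
  omega
end

section
/- For every integer g ≥ 2, the set D_g is finite and its cardinality is at most (185g − 185)(185g − 186)(185g − 187)/6. -/
section RepdigitEquation

variable {g N d : ℤ} {k : ℕ}

theorem lt_pow_of_repdigit_eq (hg : 1 < g) (hd : d ≤ g - 1)
    (h : N * (g - 1) = d * (g ^ k - 1)) : N < g ^ k := by
  have hk : 1 ≤ g ^ k := one_le_pow₀ hg.le
  have : N * (g - 1) ≤ (g ^ k - 1) * (g - 1) := by
    rw [h, mul_comm]
    exact mul_le_mul_of_nonneg_left hd (by linarith)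
  linarith [le_of_mul_le_mul_right this (by linarith)]

theorem pow_le_of_repdigit_eq (hg : 1 < g) (hd : 1 ≤ d)
    (h : N * (g - 1) = d * (g ^ (k + 1) - 1)) : g ^ k ≤ N := by
  have hk : 1 ≤ g ^ k := one_le_pow₀ hg.le
  have : g ^ k * (g - 1) ≤ N * (g - 1) := by
    have hk' : 0 ≤ g ^ k * g - 1 := by nlinarith
    rw [h, pow_succ]
    nlinarith [mul_le_mul_of_nonneg_right hd hk']
  exact le_of_mul_le_mul_right this (by linarith)

theorem le_of_repdigit_eq_of_le {N' d' : ℤ} {k' : ℕ} (hg : 1 < g) (hd : 1 ≤ d)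
    (hd' : d' ≤ g - 1) (h : N * (g - 1) = d * (g ^ k - 1))
    (h' : N' * (g - 1) = d' * (g ^ k' - 1)) (hN : N ≤ N') : k ≤ k' := by
  by_contra! hk
  obtain ⟨j, rfl⟩ : ∃ j, k = j + 1 := ⟨k - 1, by omega⟩
  have : g ^ j < g ^ k' :=
    (pow_le_of_repdigit_eq hg hd h).trans_lt (hN.trans_lt (lt_pow_of_repdigit_eq hg hd' h'))
  have := (pow_lt_pow_iff_right₀ hg).mp this
  omega

end RepdigitEquation

section DiophantineTriple

variable {g a b c d₁ d₂ d₃ : ℤ} {k l m : ℕ}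

theorem pow_dvd_mul_sub_mul (hlk : l ≤ k)
    (h₁ : (a * b + 1) * (g - 1) = d₁ * (g ^ k - 1))
    (h₂ : (a * c + 1) * (g - 1) = d₂ * (g ^ l - 1)) :
    g ^ l ∣ b * (d₂ + g - 1) - c * (d₁ + g - 1) := by
  obtain ⟨j, rfl⟩ := Nat.exists_eq_add_of_le hlk
  exact ⟨b * d₂ - c * d₁ * g ^ j, by linear_combination b * h₂ - c * h₁⟩

theorem mul_sub_mul_ne_zero (hg : 1 < g) (hc : 0 < c) (hcb : c < b) (hd₁ : 0 ≤ d₁)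
    (hd₂ : 0 ≤ d₂) (hlk : l ≤ k)
    (h₁ : (a * b + 1) * (g - 1) = d₁ * (g ^ k - 1))
    (h₂ : (a * c + 1) * (g - 1) = d₂ * (g ^ l - 1)) :
    b * (d₂ + g - 1) - c * (d₁ + g - 1) ≠ 0 := by
  intro hX
  obtain ⟨j, rfl⟩ := Nat.exists_eq_add_of_le hlk
  have hgj : 1 ≤ g ^ j := one_le_pow₀ hg.le
  have hscale : b * d₂ = c * d₁ * g ^ j := by
    refine mul_right_cancel₀ (pow_pos (by linarith : (0 : ℤ) < g) l).ne' ?_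
    linear_combination hX - b * h₂ + c * h₁
  -- Both `(d₁ + g - 1) / (d₂ + g - 1)` and `d₁ g ^ j / d₂` equal `b / c > 1`: the first
  -- forces `d₂ < d₁`, equating the two forces `d₁ ≤ d₂`.
  have hd : d₂ < d₁ := by nlinarith
  have : d₂ * (d₁ + g - 1) = d₁ * g ^ j * (d₂ + g - 1) := by
    refine mul_left_cancel₀ hc.ne' ?_
    linear_combination -d₂ * hX + (d₂ + g - 1) * hscale
  nlinarith [mul_nonneg hd₁ (by linarith : (0 : ℤ) ≤ d₂ + g - 1)]

theorem pow_le_two_mul (hg : 1 < g) (hc : 0 < c) (hcb : c < b) (hd₁ : 0 ≤ d₁)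
    (hd₁' : d₁ ≤ g - 1) (hd₂ : 0 ≤ d₂) (hd₂' : d₂ ≤ g - 1) (hlk : l ≤ k)
    (h₁ : (a * b + 1) * (g - 1) = d₁ * (g ^ k - 1))
    (h₂ : (a * c + 1) * (g - 1) = d₂ * (g ^ l - 1)) :
    g ^ l ≤ 2 * b * (g - 1) := by
  have hX := Int.le_of_dvd (abs_pos.mpr (mul_sub_mul_ne_zero hg hc hcb hd₁ hd₂ hlk h₁ h₂))
    ((dvd_abs _ _).mpr (pow_dvd_mul_sub_mul hlk h₁ h₂))
  have : |b * (d₂ + g - 1) - c * (d₁ + g - 1)| ≤ 2 * b * (g - 1) :=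
    abs_le.mpr ⟨by nlinarith, by nlinarith⟩
  exact hX.trans this

theorem pow_dvd_sq_mul_add_mul (hml : m ≤ l) (hlk : l ≤ k)
    (h₁ : (a * b + 1) * (g - 1) = d₁ * (g ^ k - 1))
    (h₂ : (a * c + 1) * (g - 1) = d₂ * (g ^ l - 1))
    (h₃ : (b * c + 1) * (g - 1) = d₃ * (g ^ m - 1)) :
    g ^ m ∣ c ^ 2 * (g - 1) * (d₁ + g - 1) + (d₂ + g - 1) * (d₃ + g - 1) := by
  obtain ⟨i, rfl⟩ := Nat.exists_eq_add_of_le hml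
  obtain ⟨j, rfl⟩ := Nat.exists_eq_add_of_le hlk
  refine ⟨c ^ 2 * (g - 1) * d₁ * g ^ (i + j) - d₂ * d₃ * g ^ (m + i)
    + d₂ * (d₃ + g - 1) * g ^ i + (d₂ + g - 1) * d₃, ?_⟩
  linear_combination c ^ 2 * (g - 1) * h₁ - b * c * (g - 1) * h₂
    - (d₂ * (g ^ (m + i) - 1) - (g - 1)) * h₃

theorem lt_two_mul_and_exponents_lt_eight (hg : 1 < g) (hc : 0 < c) (hcb : c < b)
    (hba : b < a) (hd₁ : 1 ≤ d₁) (hd₁' : d₁ ≤ g - 1) (hd₂ : 1 ≤ d₂)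
    (hd₂' : d₂ ≤ g - 1) (hd₃ : 1 ≤ d₃) (hd₃' : d₃ ≤ g - 1)
    (h₁ : (a * b + 1) * (g - 1) = d₁ * (g ^ k - 1))
    (h₂ : (a * c + 1) * (g - 1) = d₂ * (g ^ l - 1))
    (h₃ : (b * c + 1) * (g - 1) = d₃ * (g ^ m - 1)) :
    c < 2 * (g - 1) ∧ l < 8 ∧ m < 8 := by
  have hml : m ≤ l := le_of_repdigit_eq_of_le hg hd₃ hd₂' h₃ h₂ (by nlinarith)
  have hlk : l ≤ k := le_of_repdigit_eq_of_le hg hd₂ hd₁' h₂ h₁ (by nlinarith)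
  have hgl : g ^ l ≤ 2 * b * (g - 1) :=
    pow_le_two_mul hg hc hcb (by linarith) hd₁' (by linarith) hd₂' hlk h₁ h₂
  have hac : a * c + 1 < g ^ l := lt_pow_of_repdigit_eq hg hd₂' h₂
  have hc' : c < 2 * (g - 1) := by nlinarith
  have hbc : b * c + 1 < g ^ m := lt_pow_of_repdigit_eq hg hd₃' h₃
  have hU : c ^ 2 * (g - 1) * (d₁ + g - 1) + (d₂ + g - 1) * (d₃ + g - 1)
      ≤ 2 * c ^ 2 * (g - 1) ^ 2 + 4 * (g - 1) ^ 2 := by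
    have hc2 : 0 ≤ c ^ 2 * (g - 1) := mul_nonneg (sq_nonneg c) (by linarith)
    have he₂ : d₂ + g - 1 ≤ 2 * (g - 1) := by linarith
    have he₃ : d₃ + g - 1 ≤ 2 * (g - 1) := by linarith
    nlinarith [mul_le_mul_of_nonneg_left (by linarith : d₁ + g - 1 ≤ 2 * (g - 1)) hc2,
      mul_le_mul he₂ he₃ (by linarith) (by linarith)]
  have hgm : g ^ m ≤ c ^ 2 * (g - 1) * (d₁ + g - 1) + (d₂ + g - 1) * (d₃ + g - 1) := by
    refine Int.le_of_dvd ?_ (pow_dvd_sq_mul_add_mul hml hlk h₁ h₂ h₃)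
    have hc2 : 0 ≤ c ^ 2 * (g - 1) * (d₁ + g - 1) :=
      mul_nonneg (mul_nonneg (sq_nonneg c) (by linarith)) (by linarith)
    nlinarith [mul_pos (by linarith : 0 < d₂ + g - 1) (by linarith : 0 < d₃ + g - 1)]
  have hb : b ≤ 4 * (g - 1) ^ 3 + 2 * (g - 1) ^ 2 := by
    have : b * c < (2 * c * (g - 1) ^ 2 + 4 * (g - 1) ^ 2) * c := by nlinarith
    have := lt_of_mul_lt_mul_right this hc.le
    nlinarith
  have hl : l < 8 := by
    have h4 : (4 * (g - 1)) ^ 4 ≤ (g ^ 2) ^ 4 :=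
      pow_le_pow_left₀ (by linarith) (by nlinarith [sq_nonneg (g - 2)]) 4
    refine (pow_lt_pow_iff_right₀ hg).mp ?_
    nlinarith
  exact ⟨hc', hl, by omega⟩

end DiophantineTriple

open Finset

theorem natCast_repdigit_eq {g N d k : ℕ} (hg : 1 ≤ g) (h : N * (g - 1) = d * (g ^ k - 1)) :
    (N : ℤ) * (g - 1) = d * (g ^ k - 1) := by
  have := Nat.one_le_pow k g hg
  exact_mod_cast h

def repdigitsOfLengthLT (g n : ℕ) : Finset ℕ :=
  (Icc 1 (g - 1) ×ˢ range n).image fun x => x.1 * (g ^ x.2 - 1) / (g - 1)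

theorem card_repdigitsOfLengthLT_le (g n : ℕ) : #(repdigitsOfLengthLT g n) ≤ (g - 1) * n := by
  unfold repdigitsOfLengthLT
  exact card_image_le.trans (by simp)

theorem mem_repdigitsOfLengthLT {g n N d k : ℕ} (hd : 1 ≤ d) (hd' : d ≤ g - 1) (hk : k < n)
    (h : N * (g - 1) = d * (g ^ k - 1)) : N ∈ repdigitsOfLengthLT g n :=
  mem_image.mpr ⟨(d, k), by simp [hd, hd', hk], Nat.div_eq_of_eq_mul_left (by omega) h.symm⟩

theorem DioTriples.lt_two_mul_and_mem_repdigitsOfLengthLT {g a b c : ℕ}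
    (h : (a, b, c) ∈ DioTriples g) :
    c < 2 * (g - 1) ∧ a * c + 1 ∈ repdigitsOfLengthLT g 8 ∧
      b * c + 1 ∈ repdigitsOfLengthLT g 8 := by
  simp only [DioTriples, Set.mem_ofPred_eq] at h
  obtain ⟨hc, hcb, hba, ⟨-, d₁, k, hd₁, hd₁', -, h₁⟩,
    ⟨-, d₂, l, hd₂, hd₂', -, h₂⟩, ⟨-, d₃, m, hd₃, hd₃', -, h₃⟩⟩ := h
  have hg : 1 < g := by omega
  have h₁' := natCast_repdigit_eq hg.le h₁
  have h₂' := natCast_repdigit_eq hg.le h₂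
  have h₃' := natCast_repdigit_eq hg.le h₃
  push_cast at h₁' h₂' h₃'
  obtain ⟨hc', hl, hm⟩ := lt_two_mul_and_exponents_lt_eight (by omega) (by omega) (by omega)
    (by omega) (by omega) (by omega) (by omega) (by omega) (by omega) (by omega) h₁' h₂' h₃'
  exact ⟨by omega, mem_repdigitsOfLengthLT hd₂ hd₂' hl h₂,
    mem_repdigitsOfLengthLT hd₃ hd₃' hm h₃⟩

theorem DioTriples.finite_and_ncard_le (g : ℕ) :
    (DioTriples g).Finite ∧ (DioTriples g).ncard ≤ 128 * (g - 1) ^ 3 := by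
  set T := range (2 * (g - 1)) ×ˢ repdigitsOfLengthLT g 8 ×ˢ repdigitsOfLengthLT g 8
  let f : ℕ × ℕ × ℕ → ℕ × ℕ × ℕ := fun p =>
    (p.2.2, p.1 * p.2.2 + 1, p.2.1 * p.2.2 + 1)
  have hmaps : Set.MapsTo f (DioTriples g) T := by
    rintro ⟨a, b, c⟩ h
    obtain ⟨hc, ha, hb⟩ := DioTriples.lt_two_mul_and_mem_repdigitsOfLengthLT h
    simp [T, f, hc, ha, hb]
  have hinj : Set.InjOn f (DioTriples g) := by
    rintro ⟨a, b, c⟩ h ⟨a', b', c'⟩ - hf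
    simp only [f, Prod.mk.injEq, add_left_inj] at hf
    obtain ⟨rfl, ha, hb⟩ := hf
    have hc : 0 < c := h.1
    simp [Nat.eq_of_mul_eq_mul_right hc ha, Nat.eq_of_mul_eq_mul_right hc hb]
  refine ⟨.of_injOn hmaps hinj T.finite_toSet, ?_⟩
  calc (DioTriples g).ncard ≤ #T := by
        simpa using Set.ncard_le_ncard_of_injOn f hmaps hinj T.finite_toSet
    _ ≤ 2 * (g - 1) * ((g - 1) * 8 * ((g - 1) * 8)) := by
        simp only [T, card_product, card_range]
        gcongr <;> exact card_repdigitsOfLengthLT_le g 8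
    _ = 128 * (g - 1) ^ 3 := by ring

theorem stmt_2_general (g : ℕ) :
    (DioTriples g).Finite ∧
    6 * Nat.card (DioTriples g) ≤ (185 * g - 185) * (185 * g - 186) * (185 * g - 187) := by
  obtain ⟨hfin, hcard⟩ := DioTriples.finite_and_ncard_le g
  refine ⟨hfin, ?_⟩
  have h₁ : 185 * g - 185 = 185 * (g - 1) := by omega
  have h₂ : 184 * (g - 1) ≤ 185 * g - 186 := by omega
  have h₃ : 183 * (g - 1) ≤ 185 * g - 187 := by omega
  calc 6 * Nat.card (DioTriples g) ≤ 6 * (128 * (g - 1) ^ 3) := by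
        rw [Nat.card_coe_set_eq]; omega
    _ ≤ 185 * (g - 1) * (184 * (g - 1)) * (183 * (g - 1)) := by ring_nf; omega
    _ ≤ _ := by rw [h₁]; gcongr

theorem stmt_2 (g : ℕ) (hg : 2 ≤ g) :
    (DioTriples g).Finite ∧
    6 * Nat.card (DioTriples g) ≤ (185 * g - 185) * (185 * g - 186) * (185 * g - 187) :=
  stmt_2_general g
end

section
/- Let g ≥ 2 be an integer, let k₁, k₂ ≥ 1 be integers, let t₁, w₁, t₂, w₂ be non-zero integers, and put C := max{g, |t₁|, |w₁|, |t₂|, |w₂|}. Let Δ = gcd(t₁·g^{k₁} − w₁, t₂·g^{k₂} − w₂) and let X be any real number with X ≥ max{k₁, k₂, 3}. If the rational numbers t₁·g^{k₁}/w₁ and t₂·g^{k₂}/w₂ are multiplicatively independent, then Δ ≤ 2·C^{2 + 5√X}. -/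
/-!
Modulo `Δ` we have `wᵢ ≡ tᵢ gᵏⁱ`, so whenever `a k₁ = b k₂ + D` the integer
`M = t₁ᵃ w₂ᵇ gᴰ - w₁ᵃ t₂ᵇ` is divisible by `Δ`; both of its terms then reduce to `t₁ᵃ t₂ᵇ g^(a k₁)`.
Multiplicative independence of the two quotients makes `M` non-zero, hence `Δ ≤ |M| ≤ 2 C^(a+b+D)`.
Dirichlet's approximation theorem applied to `k₁ / k₂` provides such a relation with `a`, `b` and
`D` all of size `O(√X)`.
-/

/-- Two non-zero rationals are multiplicatively independent if
`α^u * β^v = 1` (with integer exponents) forces `u = v = 0`. -/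
def MultIndep (α β : ℚ) : Prop :=
  ∀ u v : ℤ, α ^ u * β ^ v = 1 → u = 0 ∧ v = 0

theorem MultIndep.symm {α β : ℚ} (h : MultIndep α β) : MultIndep β α := fun u v huv =>
  (h v u (by rwa [mul_comm])).symm

theorem MultIndep.pow_ne_pow {α β : ℚ} (h : MultIndep α β) (hβ : β ≠ 0) {a b : ℕ}
    (hab : a ≠ 0 ∨ b ≠ 0) : α ^ a ≠ β ^ b := by
  intro he
  have := h a (-b) (by
    rw [zpow_neg, zpow_natCast, zpow_natCast, he, mul_inv_cancel₀ (pow_ne_zero _ hβ)])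
  omega

section CrossTerm

variable {a b D k₁ k₂ : ℕ}

theorem mul_pow_pow_eq_of_mul_eq_add {R : Type*} [CommMonoid R] (t g : R)
    (hD : a * k₁ = b * k₂ + D) :
    (t * g ^ k₁) ^ a = t ^ a * g ^ (b * k₂) * g ^ D := by
  rw [mul_pow, ← pow_mul, mul_comm k₁, hD, pow_add, mul_assoc]

theorem dvd_cross_sub_of_dvd_sub {R : Type*} [CommRing R] {d g t₁ w₁ t₂ w₂ : R}
    (h₁ : d ∣ t₁ * g ^ k₁ - w₁) (h₂ : d ∣ t₂ * g ^ k₂ - w₂) (hD : a * k₁ = b * k₂ + D) :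
    d ∣ t₁ ^ a * w₂ ^ b * g ^ D - w₁ ^ a * t₂ ^ b := by
  have key : t₁ ^ a * w₂ ^ b * g ^ D - w₁ ^ a * t₂ ^ b =
      t₂ ^ b * ((t₁ * g ^ k₁) ^ a - w₁ ^ a) - t₁ ^ a * g ^ D * ((t₂ * g ^ k₂) ^ b - w₂ ^ b) := by
    rw [mul_pow_pow_eq_of_mul_eq_add t₁ g hD, mul_pow, ← pow_mul, mul_comm k₂]
    ring
  rw [key]
  exact dvd_sub (dvd_mul_of_dvd_right (h₁.trans (sub_dvd_pow_sub_pow _ _ _)) _)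
    (dvd_mul_of_dvd_right (h₂.trans (sub_dvd_pow_sub_pow _ _ _)) _)

theorem div_pow_eq_div_pow_of_cross_eq {K : Type*} [Field K] {g t₁ w₁ t₂ w₂ : K}
    (hw₁ : w₁ ≠ 0) (hw₂ : w₂ ≠ 0) (hD : a * k₁ = b * k₂ + D)
    (h : t₁ ^ a * w₂ ^ b * g ^ D = w₁ ^ a * t₂ ^ b) :
    (t₁ * g ^ k₁ / w₁) ^ a = (t₂ * g ^ k₂ / w₂) ^ b := by
  rw [div_pow, div_pow, div_eq_div_iff (pow_ne_zero _ hw₁) (pow_ne_zero _ hw₂),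
    mul_pow_pow_eq_of_mul_eq_add t₁ g hD, mul_pow, ← pow_mul, mul_comm k₂]
  linear_combination g ^ (b * k₂) * h

theorem abs_cross_sub_le {R : Type*} [CommRing R] [LinearOrder R] [IsStrictOrderedRing R]
    {g t₁ w₁ t₂ w₂ C : R} (hC : 1 ≤ C) (hg : |g| ≤ C) (ht₁ : |t₁| ≤ C) (hw₁ : |w₁| ≤ C)
    (ht₂ : |t₂| ≤ C) (hw₂ : |w₂| ≤ C) :
    |t₁ ^ a * w₂ ^ b * g ^ D - w₁ ^ a * t₂ ^ b| ≤ 2 * C ^ (a + b + D) := by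
  have h₁ : |t₁ ^ a * w₂ ^ b * g ^ D| ≤ C ^ a * C ^ b * C ^ D := by
    simp only [abs_mul, abs_pow]
    gcongr
  have h₂ : |w₁ ^ a * t₂ ^ b| ≤ C ^ a * C ^ b * C ^ D := by
    simp only [abs_mul, abs_pow]
    calc |w₁| ^ a * |t₂| ^ b ≤ C ^ a * C ^ b := by gcongr
      _ ≤ C ^ a * C ^ b * C ^ D := le_mul_of_one_le_right (by positivity) (one_le_pow₀ hC)
  calc _ ≤ _ := abs_sub _ _
    _ ≤ C ^ a * C ^ b * C ^ D + C ^ a * C ^ b * C ^ D := add_le_add h₁ h₂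
    _ = 2 * C ^ (a + b + D) := by rw [pow_add, pow_add]; ring

end CrossTerm

section GcdBound

variable {g t₁ w₁ t₂ w₂ C : ℤ} {k₁ k₂ a b D : ℕ}

theorem cross_sub_ne_zero (hg : g ≠ 0) (ht₂ : t₂ ≠ 0) (hw₁ : w₁ ≠ 0) (hw₂ : w₂ ≠ 0)
    (hind : MultIndep ((t₁ * g ^ k₁ : ℤ) / (w₁ : ℚ)) ((t₂ * g ^ k₂ : ℤ) / (w₂ : ℚ)))
    (hab : a ≠ 0 ∨ b ≠ 0) (hD : a * k₁ = b * k₂ + D) :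
    t₁ ^ a * w₂ ^ b * g ^ D - w₁ ^ a * t₂ ^ b ≠ 0 := by
  intro hM
  refine hind.pow_ne_pow (by push_cast; positivity) hab ?_
  push_cast
  exact div_pow_eq_div_pow_of_cross_eq (by exact_mod_cast hw₁) (by exact_mod_cast hw₂) hD
    (by exact_mod_cast sub_eq_zero.mp hM)

theorem gcd_le_two_mul_pow_of_mul_eq_add (hg : 2 ≤ g) (ht₂ : t₂ ≠ 0) (hw₁ : w₁ ≠ 0)
    (hw₂ : w₂ ≠ 0) (hgC : g ≤ C) (ht₁C : |t₁| ≤ C) (hw₁C : |w₁| ≤ C) (ht₂C : |t₂| ≤ C)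
    (hw₂C : |w₂| ≤ C)
    (hind : MultIndep ((t₁ * g ^ k₁ : ℤ) / (w₁ : ℚ)) ((t₂ * g ^ k₂ : ℤ) / (w₂ : ℚ)))
    (hab : a ≠ 0 ∨ b ≠ 0) (hD : a * k₁ = b * k₂ + D) :
    (Int.gcd (t₁ * g ^ k₁ - w₁) (t₂ * g ^ k₂ - w₂) : ℤ) ≤ 2 * C ^ (a + b + D) := by
  have hM := cross_sub_ne_zero (by omega) ht₂ hw₁ hw₂ hind hab hD
  have hdvd := dvd_cross_sub_of_dvd_sub (Int.gcd_dvd_left (t₁ * g ^ k₁ - w₁) (t₂ * g ^ k₂ - w₂))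
    (Int.gcd_dvd_right (t₁ * g ^ k₁ - w₁) (t₂ * g ^ k₂ - w₂)) hD
  calc _ ≤ |t₁ ^ a * w₂ ^ b * g ^ D - w₁ ^ a * t₂ ^ b| :=
        Int.le_of_dvd (abs_pos.mpr hM) ((dvd_abs _ _).mpr hdvd)
    _ ≤ 2 * C ^ (a + b + D) :=
        abs_cross_sub_le (by omega) (by rwa [abs_of_nonneg (by omega)]) ht₁C hw₁C ht₂C hw₂C

theorem gcd_le_two_mul_pow_natAbs (hg : 2 ≤ g) (ht₁ : t₁ ≠ 0) (ht₂ : t₂ ≠ 0) (hw₁ : w₁ ≠ 0)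
    (hw₂ : w₂ ≠ 0) (hgC : g ≤ C) (ht₁C : |t₁| ≤ C) (hw₁C : |w₁| ≤ C) (ht₂C : |t₂| ≤ C)
    (hw₂C : |w₂| ≤ C)
    (hind : MultIndep ((t₁ * g ^ k₁ : ℤ) / (w₁ : ℚ)) ((t₂ * g ^ k₂ : ℤ) / (w₂ : ℚ)))
    (hab : a ≠ 0 ∨ b ≠ 0) :
    (Int.gcd (t₁ * g ^ k₁ - w₁) (t₂ * g ^ k₂ - w₂) : ℤ) ≤
      2 * C ^ (a + b + ((a * k₁ : ℤ) - b * k₂).natAbs) := by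
  rcases le_total (b * k₂) (a * k₁) with h | h
  · obtain ⟨D, hD⟩ := Nat.exists_eq_add_of_le h
    convert gcd_le_two_mul_pow_of_mul_eq_add hg ht₂ hw₁ hw₂ hgC ht₁C hw₁C ht₂C hw₂C hind hab hD
      using 3
    zify at hD
    omega
  · obtain ⟨D, hD⟩ := Nat.exists_eq_add_of_le h
    rw [Int.gcd_comm]
    convert gcd_le_two_mul_pow_of_mul_eq_add hg ht₁ hw₂ hw₁ hgC ht₂C hw₂C ht₁C hw₁C hind.symm
      hab.symm hD using 3
    zify at hD
    omega

end GcdBound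

theorem exists_abs_mul_sub_mul_lt_sqrt (k₁ : ℕ) {k₂ : ℕ} {X : ℝ} (hk₂ : 0 < k₂)
    (h₂ : (k₂ : ℝ) ≤ X) (hX : 1 ≤ X) :
    ∃ a : ℕ, ∃ j : ℤ, 0 < a ∧ (a : ℝ) ≤ √X ∧ |(a : ℝ) * k₁ - j * k₂| < √X := by
  have hk₂0 : (0 : ℝ) < k₂ := by exact_mod_cast hk₂
  have hs1 : 1 ≤ √X := Real.one_le_sqrt.mpr hX
  have hn : 0 < ⌊√X⌋₊ := Nat.floor_pos.mpr hs1
  have hsn : √X < ⌊√X⌋₊ + 1 := Nat.lt_floor_add_one _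
  obtain ⟨j, a, ha, han, happrox⟩ := Real.exists_int_int_abs_mul_sub_le ((k₁ : ℝ) / k₂) hn
  lift a to ℕ using ha.le
  refine ⟨a, j, by omega, (Nat.cast_le.mpr (by omega)).trans (Nat.floor_le (by positivity)), ?_⟩
  calc |(a : ℝ) * k₁ - j * k₂| = |k₂ * (a * ((k₁ : ℝ) / k₂) - j)| := by
        congr 1
        field_simp
    _ = k₂ * |a * ((k₁ : ℝ) / k₂) - j| := by rw [abs_mul, abs_of_pos hk₂0]
    _ ≤ k₂ * (1 / (⌊√X⌋₊ + 1)) := by exact_mod_cast mul_le_mul_of_nonneg_left happrox hk₂0.le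
    _ ≤ X / (⌊√X⌋₊ + 1) := by rw [mul_one_div]; gcongr
    _ < X / √X := by gcongr
    _ = √X := Real.div_sqrt

theorem exists_small_mul_sub_mul {k₁ k₂ : ℕ} {X : ℝ} (h₁ : (k₁ : ℝ) ≤ X) (h₂ : (k₂ : ℝ) ≤ X) :
    ∃ a b : ℕ, (a ≠ 0 ∨ b ≠ 0) ∧
      ((a + b + ((a * k₁ : ℤ) - b * k₂).natAbs : ℕ) : ℝ) ≤ 1 + 3 * √X := by
  wlog hk : k₁ ≤ k₂ generalizing k₁ k₂
  · obtain ⟨a, b, hab, hle⟩ := this h₂ h₁ (by omega)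
    refine ⟨b, a, hab.symm, ?_⟩
    convert hle using 3
    · omega
    · rw [← Int.natAbs_neg, neg_sub]
  rcases le_or_gt (k₁ : ℝ) (3 * √X) with hk₁ | hk₁
  · exact ⟨1, 0, Or.inl one_ne_zero, by push_cast; simpa using hk₁⟩
  have hk₁0 : 0 < k₁ := by
    have := Real.sqrt_nonneg X
    exact_mod_cast (show (0 : ℝ) < k₁ by linarith)
  have hkR : (k₁ : ℝ) ≤ k₂ := by exact_mod_cast hk
  have hk₁1 : (1 : ℝ) ≤ k₁ := by exact_mod_cast hk₁0
  obtain ⟨a, j, ha, has, hclose⟩ :=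
    exists_abs_mul_sub_mul_lt_sqrt k₁ (hk₁0.trans_le hk) h₂ (by linarith)
  obtain ⟨hlo, hhi⟩ := abs_lt.mp hclose
  have ha1 : (1 : ℝ) ≤ a := by exact_mod_cast ha
  have hj : 0 < j := by
    have : (0 : ℝ) < j * k₂ := by nlinarith
    exact_mod_cast pos_of_mul_pos_left this (by positivity)
  have hja : j ≤ a := by
    have : (j : ℝ) < a + 1 := by nlinarith
    exact Int.lt_add_one_iff.mp (by exact_mod_cast this)
  lift j to ℕ using hj.le
  refine ⟨a, j, Or.inl ha.ne', ?_⟩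
  have hja' : (j : ℝ) ≤ a := by exact_mod_cast hja
  push_cast [Nat.cast_natAbs] at hclose ⊢
  linarith

theorem stmt_3_general (g : ℤ) (hg : 2 ≤ g) (k₁ k₂ : ℕ)
    (t₁ w₁ t₂ w₂ : ℤ) (ht₁ : t₁ ≠ 0) (hw₁ : w₁ ≠ 0) (ht₂ : t₂ ≠ 0) (hw₂ : w₂ ≠ 0)
    (C : ℤ) (hC : C = max (max g |t₁|) (max (max |w₁| |t₂|) |w₂|))
    (X : ℝ) (hX : max (max (k₁ : ℝ) (k₂ : ℝ)) 3 ≤ X)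
    (hind : MultIndep ((t₁ * g ^ k₁ : ℤ) / (w₁ : ℚ)) ((t₂ * g ^ k₂ : ℤ) / (w₂ : ℚ))) :
    (Int.gcd (t₁ * g ^ k₁ - w₁) (t₂ * g ^ k₂ - w₂) : ℝ) ≤
      2 * (C : ℝ) ^ ((2 : ℝ) + 5 * Real.sqrt X) := by
  obtain ⟨a, b, hab, hsmall⟩ := exists_small_mul_sub_mul
    ((le_max_left _ _).trans ((le_max_left _ _).trans hX))
    ((le_max_right _ _).trans ((le_max_left _ _).trans hX))
  have hgcd := gcd_le_two_mul_pow_natAbs hg ht₁ ht₂ hw₁ hw₂ (C := C) (by rw [hC]; omega)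
    (by rw [hC]; omega) (by rw [hC]; omega) (by rw [hC]; omega) (by rw [hC]; omega) hind hab
  set N := a + b + ((a * k₁ : ℤ) - b * k₂).natAbs
  have hC1 : (1 : ℝ) ≤ C := by exact_mod_cast (show 1 ≤ C by rw [hC]; omega)
  calc (Int.gcd (t₁ * g ^ k₁ - w₁) (t₂ * g ^ k₂ - w₂) : ℝ) ≤ 2 * (C : ℝ) ^ N := by
        exact_mod_cast hgcd
    _ = 2 * (C : ℝ) ^ (N : ℝ) := by rw [Real.rpow_natCast]
    _ ≤ 2 * (C : ℝ) ^ ((2 : ℝ) + 5 * Real.sqrt X) := by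
        gcongr
        linarith [Real.sqrt_nonneg X]

theorem stmt_3 (g : ℤ) (hg : 2 ≤ g) (k₁ k₂ : ℕ) (hk₁ : 1 ≤ k₁) (hk₂ : 1 ≤ k₂)
    (t₁ w₁ t₂ w₂ : ℤ) (ht₁ : t₁ ≠ 0) (hw₁ : w₁ ≠ 0) (ht₂ : t₂ ≠ 0) (hw₂ : w₂ ≠ 0)
    (C : ℤ) (hC : C = max (max g |t₁|) (max (max |w₁| |t₂|) |w₂|))
    (X : ℝ) (hX : max (max (k₁ : ℝ) (k₂ : ℝ)) 3 ≤ X)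
    (hind : MultIndep ((t₁ * g ^ k₁ : ℤ) / (w₁ : ℚ)) ((t₂ * g ^ k₂ : ℤ) / (w₂ : ℚ))) :
    (Int.gcd (t₁ * g ^ k₁ - w₁) (t₂ * g ^ k₂ - w₂) : ℝ) ≤
      2 * (C : ℝ) ^ ((2 : ℝ) + 5 * Real.sqrt X) :=
  stmt_3_general g hg k₁ k₂ t₁ w₁ t₂ w₂ ht₁ hw₁ ht₂ hw₂ C hC X hX hind
end

section
/- Let m, n and X be non-negative integers such that not both m and n are zero and such that X ≥ max{3, m, n}. Then there exist integers (u, v) ≠ (0, 0) such that max{|u|, |v|} ≤ √X and 0 ≤ m·u + n·v ≤ 2·√X. -/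
theorem stmt_4 (m n X : ℕ) (hmn : ¬(m = 0 ∧ n = 0))
    (hX : max 3 (max m n) ≤ X) :
    ∃ u v : ℤ, (u, v) ≠ (0, 0) ∧
      (max |u| |v| : ℝ) ≤ Real.sqrt X ∧
      0 ≤ (m : ℤ) * u + (n : ℤ) * v ∧
      ((m : ℤ) * u + (n : ℤ) * v : ℝ) ≤ 2 * Real.sqrt X := by
  set k := Nat.sqrt X with hkdef
  have hX3 : 3 ≤ X := le_trans (le_max_left _ _) hX
  have hk1 : 1 ≤ k := Nat.le_sqrt.mpr (by omega)
  have hkX : k * k ≤ X := by have := Nat.sqrt_le' X; simpa [pow_two] using this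
  have hXk : X < (k + 1) * (k + 1) := by
    have := Nat.lt_succ_sqrt' X; simpa [pow_two, Nat.succ_eq_add_one] using this
  have hm : m ≤ X := le_trans (le_trans (le_max_left _ _) (le_max_right _ _)) hX
  have hn : n ≤ X := le_trans (le_trans (le_max_right _ _) (le_max_right _ _)) hX
  set d := 2 * k + 1 with hddef
  set B := (m + n) * k / d with hBdef
  have hmaps : ∀ p ∈ Finset.range (k+1) ×ˢ Finset.range (k+1),
      (m * p.1 + n * p.2) / d ∈ Finset.range (B + 1) := by
    intro p hp
    simp only [Finset.mem_product, Finset.mem_range] at hp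
    simp only [Finset.mem_range, Nat.lt_succ_iff]
    apply Nat.div_le_div_right
    calc m * p.1 + n * p.2 ≤ m * k + n * k :=
          Nat.add_le_add (Nat.mul_le_mul_left _ (by omega)) (Nat.mul_le_mul_left _ (by omega))
      _ = (m + n) * k := by ring
  have hcard : (Finset.range (B + 1)).card < ((Finset.range (k+1)) ×ˢ (Finset.range (k+1))).card := by
    simp only [Finset.card_range, Finset.card_product]
    have hB : B < k * k + 2 * k := by
      rw [hBdef, Nat.div_lt_iff_lt_mul (by omega : 0 < d)]
      have h2 : X ≤ k * k + 2 * k := by nlinarith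
      nlinarith
    nlinarith
  obtain ⟨p, hp, q, hq, hpq, hfeq⟩ :=
    Finset.exists_ne_map_eq_of_card_lt_of_maps_to hcard hmaps
  simp only [Finset.mem_product, Finset.mem_range, Nat.lt_succ_iff] at hp hq
  obtain ⟨a, b, hab, ha1, ha2, hb1, hb2, hfeq', hle⟩ :
      ∃ a b : ℕ × ℕ, a ≠ b ∧ a.1 ≤ k ∧ a.2 ≤ k ∧ b.1 ≤ k ∧ b.2 ≤ k ∧
        (m * a.1 + n * a.2) / d = (m * b.1 + n * b.2) / d ∧
        m * b.1 + n * b.2 ≤ m * a.1 + n * a.2 := by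
    rcases le_total (m * q.1 + n * q.2) (m * p.1 + n * p.2) with h | h
    · exact ⟨p, q, hpq, hp.1, hp.2, hq.1, hq.2, hfeq, h⟩
    · exact ⟨q, p, hpq.symm, hq.1, hq.2, hp.1, hp.2, hfeq.symm, h⟩
  have hgap : m * a.1 + n * a.2 ≤ m * b.1 + n * b.2 + 2 * k := by
    have h1 := Nat.div_add_mod (m * a.1 + n * a.2) d
    rw [hfeq'] at h1
    have h2 := Nat.div_add_mod (m * b.1 + n * b.2) d
    have h3 : (m * a.1 + n * a.2) % d < d := Nat.mod_lt _ (by omega)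
    omega
  have hksqrt : (k : ℝ) ≤ Real.sqrt X := by
    rw [show ((k : ℕ) : ℝ) = Real.sqrt ((k * k : ℕ) : ℝ) by
      push_cast; rw [Real.sqrt_mul_self (by positivity)]]
    exact Real.sqrt_le_sqrt (by exact_mod_cast hkX)
  have key : (m : ℤ) * ((a.1 : ℤ) - b.1) + (n : ℤ) * ((a.2 : ℤ) - b.2)
      = ((m * a.1 + n * a.2 : ℕ) : ℤ) - ((m * b.1 + n * b.2 : ℕ) : ℤ) := by
    push_cast; ring
  have hint : (m : ℤ) * ((a.1 : ℤ) - b.1) + (n : ℤ) * ((a.2 : ℤ) - b.2) ≤ 2 * k := by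
    rw [key]; omega
  have hnonneg : 0 ≤ (m : ℤ) * ((a.1 : ℤ) - b.1) + (n : ℤ) * ((a.2 : ℤ) - b.2) := by
    rw [key]; omega
  refine ⟨(a.1 : ℤ) - b.1, (a.2 : ℤ) - b.2, ?_, ?_, hnonneg, ?_⟩
  · intro h
    apply hab
    rw [Prod.mk.injEq] at h
    refine Prod.ext ?_ ?_ <;> omega
  · have hmax : max |(a.1 : ℤ) - b.1| |(a.2 : ℤ) - b.2| ≤ (k : ℤ) := by
      apply max_le <;> rw [abs_le] <;> constructor <;> omega
    refine le_trans ?_ hksqrt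
    rw [← Int.cast_abs, ← Int.cast_abs, ← Int.cast_max]
    exact_mod_cast hmax
  · refine le_trans ?_ (by push_cast; linarith : ((2 * (k : ℤ) : ℤ) : ℝ) ≤ 2 * Real.sqrt X)
    exact_mod_cast hint
end

section
/- Let g ≥ 2 be an integer and suppose positive integers a > b > c, digits d₁, d₂, d₃ ∈ {1,…,g−1} and integers n₁, n₂, n₃ ≥ 2 with n₁ ≤ n₂ ≤ n₃ satisfy ab+1 = d₃(g^{n₃}−1)/(g−1), ac+1 = d₂(g^{n₂}−1)/(g−1) and bc+1 = d₁(g^{n₁}−1)/(g−1). Then n₃ ≤ 186. -/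
private lemma pow_ge_int {G : ℤ} (hG : 2 ≤ G) {s t : ℕ} (h : s ≤ t) : G ^ s ≤ G ^ t :=
  pow_le_pow_right₀ (by linarith) h

private lemma strict_aux {G E x y : ℤ} (t : ℕ) (hG : 2 ≤ G) (hE : E = G - 1)
    (hx : 1 ≤ x) (hy : 1 ≤ y) (hy' : y ≤ E) (ht : 1 ≤ t) :
    x * (y + E) < y * (x + E) * G ^ t := by
  subst hE
  have h1 : G ≤ G ^ t := by
    calc G = G ^ 1 := (pow_one G).symm
    _ ≤ G ^ t := pow_ge_int hG ht
  have hyx : 0 ≤ y * (x + (G - 1)) := by nlinarith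
  have h2 : y * (x + (G - 1)) * G ≤ y * (x + (G - 1)) * G ^ t :=
    mul_le_mul_of_nonneg_left h1 hyx
  have hxy : x ≤ x * y := by nlinarith
  nlinarith [h2, mul_nonneg (by linarith : (0:ℤ) ≤ G - 1) (by linarith : (0:ℤ) ≤ x * y - x),
    mul_pos (by linarith : (0:ℤ) < y) (by linarith : (0:ℤ) < G),
    mul_pos (mul_pos (by linarith : (0:ℤ) < y) (by linarith : (0:ℤ) < G)) (by linarith : (0:ℤ) < G - 1)]

set_option maxHeartbeats 1000000 in
private lemma key (G A B C δ₁ δ₂ δ₃ : ℤ) (n₁ m k : ℕ)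
    (hG : 2 ≤ G)
    (hC : 1 ≤ C) (hCB : C < B) (hBA : B < A)
    (hδ₁ : 1 ≤ δ₁) (hδ₁' : δ₁ ≤ G - 1)
    (hδ₂ : 1 ≤ δ₂) (hδ₂' : δ₂ ≤ G - 1)
    (hδ₃ : 1 ≤ δ₃) (hδ₃' : δ₃ ≤ G - 1)
    (hn₁ : 2 ≤ n₁)
    (h1 : B * C * (G - 1) = δ₁ * G ^ n₁ - (δ₁ + (G - 1)))
    (h2 : A * C * (G - 1) = δ₂ * G ^ (n₁ + m) - (δ₂ + (G - 1)))
    (h3 : A * B * (G - 1) = δ₃ * G ^ (n₁ + m + k) - (δ₃ + (G - 1))) :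
    n₁ + m + k ≤ 186 := by
  rw [pow_add] at h2
  rw [pow_add, pow_add] at h3
  obtain ⟨E, hE⟩ : ∃ E : ℤ, E = G - 1 := ⟨G - 1, rfl⟩
  rw [← hE] at h1 h2 h3 hδ₁' hδ₂' hδ₃'
  have hE1 : 1 ≤ E := by omega
  have hG0 : (0:ℤ) < G := by omega
  have hB : 2 ≤ B := by omega
  have hA : 3 ≤ A := by omega
  have hPn0 : (0:ℤ) < G ^ n₁ := by positivity
  have hPm0 : (0:ℤ) < G ^ m := by positivity
  have hPk0 : (0:ℤ) < G ^ k := by positivity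
  have hPm1 : (1:ℤ) ≤ G ^ m := by simpa using pow_ge_int hG (Nat.zero_le m)
  have hPk1 : (1:ℤ) ≤ G ^ k := by simpa using pow_ge_int hG (Nat.zero_le k)
  have hPn4 : (4:ℤ) ≤ G ^ n₁ := by
    have h4 : (2:ℤ) ^ 2 ≤ G ^ 2 := pow_le_pow_left₀ (by norm_num) hG 2
    have h5 : G ^ 2 ≤ G ^ n₁ := pow_ge_int hG hn₁
    norm_num at h4; linarith
  -- small product facts (small context here)
  have hCE1 : 1 ≤ C * E := by
    have := mul_le_mul hC hE1 (by norm_num) (by linarith)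
    linarith only [this]
  have hCC1 : 1 ≤ C * C := by
    have := mul_le_mul hC hC (by norm_num) (by linarith)
    linarith only [this]
  have hCCE1 : 1 ≤ C * C * E := by
    have := mul_le_mul hCC1 hE1 (by norm_num) (by linarith)
    linarith only [this]
  have hX1ub : B * C * E ≤ E * G ^ n₁ - 2 := by
    have := mul_le_mul_of_nonneg_right hδ₁' hPn0.le
    linarith only [h1, this, hδ₁, hE1]
  have hX2ub : A * C * E ≤ E * (G ^ n₁ * G ^ m) - 2 := by
    have := mul_le_mul_of_nonneg_right hδ₂' (by positivity : (0:ℤ) ≤ G ^ n₁ * G ^ m)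
    linarith only [h2, this, hδ₂, hE1]
  have hBC2 : 2 ≤ B * C := by
    have := mul_le_mul hB hC (by norm_num) (by linarith)
    linarith only [this]
  have hBCE2 : 2 ≤ B * C * E := by
    have := mul_le_mul hBC2 hE1 (by norm_num) (by linarith)
    linarith only [this]
  have hAC3 : 3 ≤ A * C := by
    have := mul_le_mul hA hC (by norm_num) (by linarith)
    linarith only [this]
  have hACE2 : 2 ≤ A * C * E := by
    have := mul_le_mul hAC3 hE1 (by norm_num) (by linarith)
    linarith only [this]
  have hAB6 : 6 ≤ A * B := by
    have := mul_le_mul hA hB (by norm_num) (by linarith)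
    linarith only [this]
  have hABE6 : 6 ≤ A * B * E := by
    have := mul_le_mul hAB6 hE1 (by norm_num) (by linarith)
    linarith only [this]
  have hc2 : C * C * E ≤ E * G ^ n₁ - 2 := by
    have u1 : C * C ≤ B * C := mul_le_mul_of_nonneg_right hCB.le (by linarith)
    have u2 : C * C * E ≤ B * C * E := mul_le_mul_of_nonneg_right u1 (by linarith)
    linarith only [u2, hX1ub]
  have hD12 : 4 ≤ (δ₁ + E) * (δ₂ + E) := by
    have := mul_le_mul (show (2:ℤ) ≤ δ₁ + E by linarith) (show (2:ℤ) ≤ δ₂ + E by linarith)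
      (by norm_num) (by linarith)
    linarith only [this]
  have hCCED3 : 2 ≤ C * C * E * (δ₃ + E) := by
    have := mul_le_mul hCCE1 (show (2:ℤ) ≤ δ₃ + E by linarith) (by norm_num) (by linarith)
    linarith only [this]
  have hGG4 : (4:ℤ) ≤ G * G := by
    have := mul_le_mul hG hG (by norm_num) (by linarith)
    linarith only [this]
  have hGsq : (0:ℤ) < G * G := by positivity
  have hE3G : E * E * E ≤ G * (G * G) := by
    rw [hE]
    nlinarith [hGsq, hG0, mul_pos hG0 hG0]
  have hEG3 : E * E * E < G * (G * G) := by
    rw [hE]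
    nlinarith [hGsq, hG0, mul_pos hG0 hG0]
  have hGE2 : 2 * (E * E) < 2 * (G * G) := by
    rw [hE]
    nlinarith [hG0]
  have h32 : (32:ℤ) ≤ G ^ 5 := by
    calc (32:ℤ) = 2 ^ 5 := by norm_num
    _ ≤ G ^ 5 := pow_le_pow_left₀ (by norm_num) hG 5
  have b1 : (δ₁ + E) * (δ₂ + E) ≤ (2 * E) * (2 * E) :=
    mul_le_mul (by linarith) (by linarith) (by linarith) (by linarith)
  have hEE2 : (0:ℤ) ≤ E * E * (G ^ n₁ - 4) :=
    mul_nonneg (mul_nonneg (by linarith) (by linarith)) (by linarith)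
  have t1core : (δ₁ + E) * (δ₂ + E) * δ₃ ≤ 4 * (E * E * E) := by
    have u := mul_le_mul b1 hδ₃' (by linarith) (by positivity : (0:ℤ) ≤ (2 * E) * (2 * E))
    linarith only [u]
  have w31 : (δ₃ + E) * δ₁ ≤ (2 * E) * E :=
    mul_le_mul (by linarith) hδ₁' (by linarith) (by linarith)
  have t3core : (δ₃ + E) * δ₁ * (δ₂ + E) ≤ 4 * (E * E * E) := by
    have u := mul_le_mul w31 (show δ₂ + E ≤ 2 * E by linarith) (by linarith)
      (by positivity : (0:ℤ) ≤ (2 * E) * E)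
    linarith only [u]
  have w32 : (δ₃ + E) * δ₂ ≤ (2 * E) * E :=
    mul_le_mul (by linarith) hδ₂' (by linarith) (by linarith)
  have t4core : (δ₃ + E) * δ₂ * (δ₁ + E) ≤ 4 * (E * E * E) := by
    have u := mul_le_mul w32 (show δ₁ + E ≤ 2 * E by linarith) (by linarith)
      (by positivity : (0:ℤ) ≤ (2 * E) * E)
    linarith only [u]
  have e2core : (δ₃ + E) * δ₁ * δ₂ ≤ 2 * (E * E * E) := by
    have u := mul_le_mul w31 hδ₂' (by linarith) (by positivity : (0:ℤ) ≤ (2 * E) * E)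
    linarith only [u]
  have hmk1 : (1:ℤ) ≤ G ^ m * G ^ k := by
    have := mul_le_mul hPm1 hPk1 (by norm_num) (by linarith)
    linarith only [this]
  -- the master equation
  have star : C * C * E * (δ₃ * (G ^ n₁ * G ^ m * G ^ k) - (δ₃ + E)) =
      (δ₁ * G ^ n₁ - (δ₁ + E)) * (δ₂ * (G ^ n₁ * G ^ m) - (δ₂ + E)) := by
    linear_combination (-(C * C * E)) * h3 + (A * C * E) * h1 + (δ₁ * G ^ n₁ - (δ₁ + E)) * h2
  -- the quotient ν
  obtain ⟨ν, hν_eq⟩ : ∃ ν : ℤ, (δ₁ + E) * (δ₂ + E) + C * C * E * (δ₃ + E) = G ^ n₁ * ν :=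
    ⟨C * C * E * δ₃ * (G ^ m * G ^ k) - δ₁ * δ₂ * (G ^ n₁ * G ^ m) + δ₁ * (δ₂ + E) +
      (δ₁ + E) * δ₂ * G ^ m, by linear_combination -star⟩
  have hν1 : 1 ≤ ν := by
    by_contra h
    push_neg at h
    have h0 : 0 ≤ G ^ n₁ * (-ν) := mul_nonneg hPn0.le (by omega)
    linarith only [hν_eq, h0, hD12, hCCED3]
  have hνub : ν ≤ 3 * (E * E) := by
    have b2 : C * C * E * (δ₃ + E) ≤ (E * G ^ n₁ - 2) * (2 * E) :=
      mul_le_mul hc2 (by linarith) (by linarith) (by linarith [hEE2, hPn4, hE1])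
    have hb : G ^ n₁ * ν ≤ G ^ n₁ * (3 * (E * E)) := by
      linarith only [hν_eq, b1, b2, hEE2, hE1]
    exact le_of_mul_le_mul_left hb hPn0
  -- the key divisibility identity
  have hΘ : G ^ n₁ * G ^ m * (ν * δ₃ * G ^ k - (δ₃ + E) * δ₁ * δ₂) =
      (δ₁ + E) * (δ₂ + E) * δ₃ * (G ^ m * G ^ k) + ν * (δ₃ + E) -
        (δ₃ + E) * δ₁ * (δ₂ + E) - (δ₃ + E) * δ₂ * (δ₁ + E) * G ^ m := by
    have H : G ^ n₁ * (G ^ n₁ * G ^ m * (ν * δ₃ * G ^ k - (δ₃ + E) * δ₁ * δ₂)) =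
        G ^ n₁ * ((δ₁ + E) * (δ₂ + E) * δ₃ * (G ^ m * G ^ k) + ν * (δ₃ + E) -
          (δ₃ + E) * δ₁ * (δ₂ + E) - (δ₃ + E) * δ₂ * (δ₁ + E) * G ^ m) := by
      linear_combination (δ₃ + E) * star - (δ₃ * (G ^ n₁ * G ^ m * G ^ k) - (δ₃ + E)) * hν_eq
    exact mul_left_cancel₀ (ne_of_gt hPn0) H
  obtain ⟨W, hWdef⟩ : ∃ W : ℤ, W = ν * δ₃ * G ^ k - (δ₃ + E) * δ₁ * δ₂ := ⟨_, rfl⟩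
  rw [← hWdef] at hΘ
  -- RHS bounds for hΘ
  have t1 : (δ₁ + E) * (δ₂ + E) * δ₃ * (G ^ m * G ^ k) ≤ 4 * (E * E * E) * (G ^ m * G ^ k) :=
    mul_le_mul_of_nonneg_right t1core (by positivity)
  have t1l : 0 ≤ (δ₁ + E) * (δ₂ + E) * δ₃ * (G ^ m * G ^ k) := by positivity
  have t2 : ν * (δ₃ + E) ≤ 6 * (E * E * E) := by
    have := mul_le_mul hνub (by linarith : δ₃ + E ≤ 2 * E) (by linarith) (by positivity)
    linarith only [this]
  have t2l : 0 ≤ ν * (δ₃ + E) := mul_nonneg (by linarith) (by linarith)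
  have t3 : 0 ≤ (δ₃ + E) * δ₁ * (δ₂ + E) := by positivity
  have t3' : (δ₃ + E) * δ₁ * (δ₂ + E) ≤ 4 * (E * E * E) := t3core
  have t4 : 0 ≤ (δ₃ + E) * δ₂ * (δ₁ + E) * G ^ m := by positivity
  have t4' : (δ₃ + E) * δ₂ * (δ₁ + E) * G ^ m ≤ 4 * (E * E * E) * G ^ m :=
    mul_le_mul_of_nonneg_right t4core hPm0.le
  -- bridges
  have f5 : 6 * (E * E * E) ≤ 6 * (E * E * E) * (G ^ m * G ^ k) :=
    le_mul_of_one_le_right (by positivity) hmk1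
  have f7 : 4 * (E * E * E) ≤ 4 * (E * E * E) * (G ^ m * G ^ k) :=
    le_mul_of_one_le_right (by positivity) hmk1
  have f8 : 4 * (E * E * E) * G ^ m ≤ 4 * (E * E * E) * (G ^ m * G ^ k) := by
    have h' : (4 * (E * E * E) * G ^ m) * 1 ≤ (4 * (E * E * E) * G ^ m) * G ^ k :=
      mul_le_mul_of_nonneg_left hPk1 (by positivity)
    linarith only [h']
  have f9 : 12 * (E * E * E) ≤ 12 * (E * E * E) * (G ^ m * G ^ k) :=
    le_mul_of_one_le_right (by positivity) hmk1
  have fpos : (0:ℤ) ≤ 8 * (E * E * E) * (G ^ m * G ^ k) := by positivity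
  -- W ≠ 0
  have hW0 : W ≠ 0 := by
    intro hw
    have hR : (δ₁ + E) * (δ₂ + E) * δ₃ * (G ^ m * G ^ k) + ν * (δ₃ + E) -
        (δ₃ + E) * δ₁ * (δ₂ + E) - (δ₃ + E) * δ₂ * (δ₁ + E) * G ^ m = 0 := by
      rw [← hΘ, hw, mul_zero]
    have hw' : ν * δ₃ * G ^ k - (δ₃ + E) * δ₁ * δ₂ = 0 := hWdef.symm.trans hw
    have hfac : (δ₃ * (δ₁ + E) * (G ^ m * G ^ k) - δ₁ * (δ₃ + E)) *
        (δ₃ * (δ₂ + E) * G ^ k - δ₂ * (δ₃ + E)) = 0 := by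
      linear_combination (δ₃ * G ^ k) * hR - (δ₃ + E) * hw'
    rcases mul_eq_zero.mp hfac with hf | hf
    · rcases Nat.eq_zero_or_pos (m + k) with hmk | hmk
      · obtain ⟨hm0, hk0⟩ : m = 0 ∧ k = 0 := by omega
        subst hm0; subst hk0
        simp only [pow_zero, mul_one] at hf h3
        have hEd : E * (δ₃ - δ₁) = 0 := by linear_combination hf
        have hd : δ₃ = δ₁ := by
          rcases mul_eq_zero.mp hEd with h | h
          · omega
          · omega
        have hz : B * E * (A - C) = 0 := by
          linear_combination h3 - h1 + (G ^ n₁ - 1) * hd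
        have : 0 < B * E * (A - C) :=
          mul_pos (mul_pos (by linarith) (by linarith)) (by linarith)
        omega
      · have hs := strict_aux (m + k) hG hE hδ₁ hδ₃ hδ₃' hmk
        rw [pow_add] at hs
        have hf' : δ₃ * (δ₁ + E) * (G ^ m * G ^ k) = δ₁ * (δ₃ + E) := by
          linarith only [hf]
        linarith only [hf', hs]
    · rcases Nat.eq_zero_or_pos k with hk0 | hk0
      · subst hk0
        simp only [pow_zero, mul_one] at hf h3
        have hEd : E * (δ₃ - δ₂) = 0 := by linear_combination hf
        have hd : δ₃ = δ₂ := by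
          rcases mul_eq_zero.mp hEd with h | h
          · omega
          · omega
        have hz : A * E * (B - C) = 0 := by
          linear_combination h3 - h2 + (G ^ n₁ * G ^ m - 1) * hd
        have : 0 < A * E * (B - C) :=
          mul_pos (mul_pos (by linarith) (by linarith)) (by linarith)
        omega
      · have hs := strict_aux k hG hE hδ₂ hδ₃ hδ₃' hk0
        have hf' : δ₃ * (δ₂ + E) * G ^ k = δ₂ * (δ₃ + E) := by
          linarith only [hf]
        linarith only [hf', hs]
  -- Step 1 : k ≤ n₁ + 1
  have step1 : k ≤ n₁ + 1 := by
    by_contra hk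
    push_neg at hk
    have hPk_ge : G ^ n₁ * (G * G) ≤ G ^ k := by
      have h' : G ^ (n₁ + 2) ≤ G ^ k := pow_ge_int hG (by omega)
      calc G ^ n₁ * (G * G) = G ^ (n₁ + 2) := by rw [pow_add]; ring
      _ ≤ G ^ k := h'
    have u1 : δ₃ * (G ^ n₁ * G ^ m * G ^ k) - (δ₃ + E) ≤
        C * C * E * (δ₃ * (G ^ n₁ * G ^ m * G ^ k) - (δ₃ + E)) :=
      le_mul_of_one_le_left (by rw [← h3]; linarith) hCCE1
    have u2 : (δ₁ * G ^ n₁ - (δ₁ + E)) * (δ₂ * (G ^ n₁ * G ^ m) - (δ₂ + E)) ≤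
        (E * G ^ n₁) * (E * (G ^ n₁ * G ^ m)) := by
      rw [← h1, ← h2]
      exact mul_le_mul (by linarith) (by linarith) (by linarith) (by positivity)
    have v1 : G ^ n₁ * G ^ m * (G ^ n₁ * (G * G)) ≤ G ^ n₁ * G ^ m * G ^ k :=
      mul_le_mul_of_nonneg_left hPk_ge (by positivity)
    have v2 : G ^ n₁ * G ^ m * G ^ k ≤ δ₃ * (G ^ n₁ * G ^ m * G ^ k) :=
      le_mul_of_one_le_left (by positivity) hδ₃
    have hQ : 16 ≤ G ^ n₁ * G ^ n₁ * G ^ m := by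
      have q1 : (4:ℤ) * 4 ≤ G ^ n₁ * G ^ n₁ := mul_le_mul hPn4 hPn4 (by norm_num) (by linarith)
      have q2 : (G ^ n₁ * G ^ n₁) * 1 ≤ (G ^ n₁ * G ^ n₁) * G ^ m :=
        mul_le_mul_of_nonneg_left hPm1 (by positivity)
      linarith only [q1, q2]
    have hEE : E * E * (G ^ n₁ * G ^ n₁ * G ^ m) + (2 * G - 1) * (G ^ n₁ * G ^ n₁ * G ^ m) =
        G * G * (G ^ n₁ * G ^ n₁ * G ^ m) := by rw [hE]; ring
    have hbr : (2 * G - 1) * 16 ≤ (2 * G - 1) * (G ^ n₁ * G ^ n₁ * G ^ m) :=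
      mul_le_mul_of_nonneg_left hQ (by linarith)
    linarith only [star, u1, u2, v1, v2, hEE, hbr, hδ₃', hE1, hG, hE]
  -- Step 6 : n₁ ≤ k + 7
  have step6 : n₁ ≤ k + 7 := by
    have h18 : G ^ n₁ * G ^ m ≤ 18 * (E * E * E) * (G ^ m * G ^ k) := by
      rcases lt_or_gt_of_ne hW0 with hW | hW
      · have hWm : 1 ≤ -W := by omega
        have hle : G ^ n₁ * G ^ m ≤ G ^ n₁ * G ^ m * (-W) :=
          le_mul_of_one_le_right (by positivity) hWm
        linarith only [hΘ, hle, t1l, t2l, t3', t4', f7, f8, fpos]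
      · have hW1 : 1 ≤ W := by omega
        have hle : G ^ n₁ * G ^ m ≤ G ^ n₁ * G ^ m * W :=
          le_mul_of_one_le_right (by positivity) hW1
        linarith only [hΘ, hle, t1, t2, t3, t4, f5, fpos]
    have hcanc : G ^ n₁ ≤ 18 * (E * E * E) * G ^ k := by
      have h' : G ^ m * G ^ n₁ ≤ G ^ m * (18 * (E * E * E) * G ^ k) := by
        linarith only [h18]
      exact le_of_mul_le_mul_left h' hPm0
    have hfin : G ^ n₁ < G ^ (k + 8) := by
      have e1 : G ^ (k + 8) = G ^ k * (G ^ 5 * (G * (G * G))) := by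
        rw [pow_add]
        ring
      have c1 : 18 * (E * E * E) < 18 * (G * (G * G)) := by linarith only [hEG3]
      have c2 : (18:ℤ) * (G * (G * G)) ≤ G ^ 5 * (G * (G * G)) := by
        have := mul_le_mul_of_nonneg_right (show (18:ℤ) ≤ G ^ 5 by linarith only [h32])
          (show (0:ℤ) ≤ G * (G * G) by positivity)
        linarith only [this]
      have c3 : 18 * (E * E * E) * G ^ k < (G ^ 5 * (G * (G * G))) * G ^ k := by
        have := mul_lt_mul_of_pos_right (show 18 * (E * E * E) < G ^ 5 * (G * (G * G)) by
          linarith only [c1, c2]) hPk0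
        linarith only [this]
      calc G ^ n₁ ≤ 18 * (E * E * E) * G ^ k := hcanc
      _ < (G ^ 5 * (G * (G * G))) * G ^ k := c3
      _ = G ^ (k + 8) := by rw [e1]; ring
    by_contra hn
    push_neg at hn
    have := pow_ge_int hG (by omega : k + 8 ≤ n₁)
    linarith
  -- Step 7 : k ≤ 59
  have step7 : k ≤ 59 := by
    by_contra h60
    push_neg at h60
    have hνδ : 1 ≤ ν * δ₃ := by
      have := mul_le_mul hν1 hδ₃ (by norm_num) (by linarith)
      linarith only [this]
    have w1 : G ^ k - 2 * (E * E * E) ≤ W := by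
      have e1 : G ^ k ≤ ν * δ₃ * G ^ k := le_mul_of_one_le_left hPk0.le hνδ
      rw [hWdef]
      linarith only [e1, e2core]
    have w2 : 4 * (E * E * E) ≤ G ^ k := by
      have h5k : G ^ 5 ≤ G ^ k := pow_ge_int hG (by omega)
      have c := mul_le_mul hGG4 hE3G (by positivity) (by positivity)
      have e5 : (G:ℤ) ^ 5 = G * G * (G * (G * G)) := by ring
      linarith only [h5k, c, e5.ge, e5.le]
    have hWk : G ^ k ≤ 2 * W := by linarith only [w1, w2]
    have big : G ^ n₁ * (G ^ m * G ^ k) ≤ 20 * (E * E * E) * (G ^ m * G ^ k) := by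
      have e1 : G ^ n₁ * G ^ m * G ^ k ≤ G ^ n₁ * G ^ m * (2 * W) :=
        mul_le_mul_of_nonneg_left hWk (by positivity)
      linarith only [hΘ, e1, t1, t2, t3, t4, f9]
    have hcanc : G ^ n₁ ≤ 20 * (E * E * E) := by
      have h' : (G ^ m * G ^ k) * G ^ n₁ ≤ (G ^ m * G ^ k) * (20 * (E * E * E)) := by
        linarith only [big]
      exact le_of_mul_le_mul_left h' (by positivity)
    have hn8 : G ^ n₁ < G ^ 8 := by
      have c1 : 20 * (E * E * E) ≤ 20 * (G * (G * G)) := by linarith only [hE3G]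
      have c2 : (20:ℤ) * (G * (G * G)) < G ^ 5 * (G * (G * G)) := by
        have := mul_lt_mul_of_pos_right (show (20:ℤ) < G ^ 5 by linarith only [h32])
          (show (0:ℤ) < G * (G * G) by positivity)
        linarith only [this]
      have e8 : (G:ℤ) ^ 8 = G ^ 5 * (G * (G * G)) := by ring
      linarith only [hcanc, c1, c2, e8.ge, e8.le]
    have hn7 : n₁ ≤ 7 := by
      by_contra hn
      push_neg at hn
      have := pow_ge_int hG (by omega : 8 ≤ n₁)
      linarith
    omega
  -- Step 2 : m ≤ 1
  have step2 : m ≤ 1 := by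
    by_contra hm
    push_neg at hm
    have hPmG : G * G ≤ G ^ m := by
      have h' : G ^ 2 ≤ G ^ m := pow_ge_int hG (by omega)
      calc G * G = G ^ 2 := by ring
      _ ≤ G ^ m := h'
    obtain ⟨y, hydef⟩ : ∃ y : ℤ, y = C * δ₃ * G ^ k - B * δ₂ := ⟨_, rfl⟩
    have hXy : C * (δ₃ + E) - B * (δ₂ + E) = (G ^ n₁ * G ^ m) * y := by
      rw [hydef]
      linear_combination C * h3 - B * h2
    have hLa : C * E * (C * (δ₃ + E)) ≤ (E * G ^ n₁ - 2) * (2 * E) := by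
      have := mul_le_mul hc2 (show δ₃ + E ≤ 2 * E by linarith) (by linarith)
        (by linarith [hEE2, hPn4, hE1])
      linarith only [this]
    have hLb : C * E * (B * (δ₂ + E)) ≤ (E * G ^ n₁ - 2) * (2 * E) := by
      have := mul_le_mul hX1ub (show δ₂ + E ≤ 2 * E by linarith) (by linarith)
        (by linarith [hEE2, hPn4, hE1])
      linarith only [this]
    have hLa0 : 0 < C * E * (C * (δ₃ + E)) :=
      mul_pos (mul_pos (by linarith) (by linarith)) (mul_pos (by linarith) (by linarith))
    have hLb0 : 0 < C * E * (B * (δ₂ + E)) :=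
      mul_pos (mul_pos (by linarith) (by linarith)) (mul_pos (by linarith) (by linarith))
    rcases lt_trichotomy y 0 with hy1 | hy1 | hy1
    · have hym : 1 ≤ -y := by omega
      have m1 : C * E * (G ^ n₁ * G ^ m) * (-y) =
          C * E * (B * (δ₂ + E)) - C * E * (C * (δ₃ + E)) := by
        linear_combination (C * E) * hXy
      have hCy1 : 1 ≤ C * (-y) := by
        have := mul_le_mul hC hym (by norm_num) (by linarith)
        linarith only [this]
      have hq0 : 1 ≤ C * E * (-y) := by
        have := mul_le_mul hCE1 hym (by norm_num) (by linarith)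
        linarith only [this]
      have e1 : (C * E * (-y)) * (G * G) ≤ (C * E * (-y)) * G ^ m :=
        mul_le_mul_of_nonneg_left hPmG (by linarith)
      have e3 : (C * E * (-y)) * G ^ m * G ^ n₁ ≤ (2 * (E * E)) * G ^ n₁ := by
        linarith only [m1, hLb, hLa0, hE1]
      have hfin : (C * E * (-y)) * (G * G) ≤ 2 * (E * E) := by
        have e4 := mul_le_mul_of_nonneg_right e1 hPn0.le
        exact le_of_mul_le_mul_right (by linarith only [e3, e4]) hPn0
      have hq1 : C * E * (-y) ≤ 1 := by
        by_contra hq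
        push_neg at hq
        have := mul_le_mul_of_nonneg_right (show (2:ℤ) ≤ C * E * (-y) by omega)
          (show (0:ℤ) ≤ G * G by positivity)
        linarith only [this, hfin, hGE2]
      have hqe : C * E * (-y) = 1 := le_antisymm hq1 hq0
      have hEle : E ≤ C * E * (-y) := by
        have := le_mul_of_one_le_right (show (0:ℤ) ≤ E by linarith) hCy1
        linarith only [this]
      have hEe : E = 1 := by omega
      have h4' : G * G ≤ 2 * (E * E) := by
        calc G * G = (C * E * (-y)) * (G * G) := by rw [hqe]; ring
        _ ≤ 2 * (E * E) := hfin
      rw [hEe] at h4'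
      have : G = 2 := by omega
      rw [this] at h4'
      norm_num at h4'
    · have hy0 : C * δ₃ * G ^ k = B * δ₂ := by
        have : C * δ₃ * G ^ k - B * δ₂ = 0 := by omega
        omega
      have hcb3 : C * (δ₃ + E) = B * (δ₂ + E) := by
        have h' := hXy
        rw [hy1, mul_zero] at h'
        linarith only [h']
      have hCz : C * (δ₂ * (δ₃ + E) - δ₃ * (δ₂ + E) * G ^ k) = 0 := by
        linear_combination δ₂ * hcb3 - (δ₂ + E) * hy0
      have heq : δ₂ * (δ₃ + E) = δ₃ * (δ₂ + E) * G ^ k := by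
        rcases mul_eq_zero.mp hCz with h | h
        · omega
        · linarith only [h]
      rcases Nat.eq_zero_or_pos k with hk0 | hk0
      · subst hk0
        simp only [pow_zero, mul_one] at heq
        have hEd : E * (δ₂ - δ₃) = 0 := by linear_combination heq
        have hd : δ₂ = δ₃ := by
          rcases mul_eq_zero.mp hEd with h | h
          · omega
          · omega
        have hz : (B - C) * (δ₃ + E) = 0 := by
          linear_combination -hcb3 - B * hd
        have : 0 < (B - C) * (δ₃ + E) :=
          mul_pos (by linarith) (by linarith)
        omega
      · have hs := strict_aux k hG hE hδ₂ hδ₃ hδ₃' hk0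
        linarith only [heq, hs]
    · have hym : 1 ≤ y := by omega
      have m1 : C * E * (G ^ n₁ * G ^ m) * y =
          C * E * (C * (δ₃ + E)) - C * E * (B * (δ₂ + E)) := by
        linear_combination (-(C * E)) * hXy
      have hCy1 : 1 ≤ C * y := by
        have := mul_le_mul hC hym (by norm_num) (by linarith)
        linarith only [this]
      have hq0 : 1 ≤ C * E * y := by
        have := mul_le_mul hCE1 hym (by norm_num) (by linarith)
        linarith only [this]
      have e1 : (C * E * y) * (G * G) ≤ (C * E * y) * G ^ m :=
        mul_le_mul_of_nonneg_left hPmG (by linarith)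
      have e3 : (C * E * y) * G ^ m * G ^ n₁ ≤ (2 * (E * E)) * G ^ n₁ := by
        linarith only [m1, hLa, hLb0, hE1]
      have hfin : (C * E * y) * (G * G) ≤ 2 * (E * E) := by
        have e4 := mul_le_mul_of_nonneg_right e1 hPn0.le
        exact le_of_mul_le_mul_right (by linarith only [e3, e4]) hPn0
      have hq1 : C * E * y ≤ 1 := by
        by_contra hq
        push_neg at hq
        have := mul_le_mul_of_nonneg_right (show (2:ℤ) ≤ C * E * y by omega)
          (show (0:ℤ) ≤ G * G by positivity)
        linarith only [this, hfin, hGE2]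
      have hqe : C * E * y = 1 := le_antisymm hq1 hq0
      have hEle : E ≤ C * E * y := by
        have := le_mul_of_one_le_right (show (0:ℤ) ≤ E by linarith) hCy1
        linarith only [this]
      have hEe : E = 1 := by omega
      have h4' : G * G ≤ 2 * (E * E) := by
        calc G * G = (C * E * y) * (G * G) := by rw [hqe]; ring
        _ ≤ 2 * (E * E) := hfin
      rw [hEe] at h4'
      have : G = 2 := by omega
      rw [this] at h4'
      norm_num at h4'
  omega

theorem stmt_5 (g a b c d₁ d₂ d₃ n₁ n₂ n₃ : ℕ) (hg : 2 ≤ g)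
    (hc : 0 < c) (hcb : c < b) (hba : b < a)
    (hd₁ : 1 ≤ d₁) (hd₁' : d₁ ≤ g - 1) (hd₂ : 1 ≤ d₂) (hd₂' : d₂ ≤ g - 1)
    (hd₃ : 1 ≤ d₃) (hd₃' : d₃ ≤ g - 1)
    (hn₁ : 2 ≤ n₁) (hn₁₂ : n₁ ≤ n₂) (hn₂₃ : n₂ ≤ n₃)
    (hab : (a * b + 1) * (g - 1) = d₃ * (g ^ n₃ - 1))
    (hac : (a * c + 1) * (g - 1) = d₂ * (g ^ n₂ - 1))
    (hbc : (b * c + 1) * (g - 1) = d₁ * (g ^ n₁ - 1)) :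
    n₃ ≤ 186 := by
  obtain ⟨m, rfl⟩ : ∃ m, n₂ = n₁ + m := ⟨n₂ - n₁, by omega⟩
  obtain ⟨k, rfl⟩ : ∃ k, n₃ = n₁ + m + k := ⟨n₃ - (n₁ + m), by omega⟩
  have hg1 : 1 ≤ g := by omega
  have hp1 : 1 ≤ g ^ n₁ := Nat.one_le_pow _ _ (by omega)
  have hp2 : 1 ≤ g ^ (n₁ + m) := Nat.one_le_pow _ _ (by omega)
  have hp3 : 1 ≤ g ^ (n₁ + m + k) := Nat.one_le_pow _ _ (by omega)
  zify [hg1, hp1, hp2, hp3] at hab hac hbc hd₁' hd₂' hd₃'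
  have h1 : (b : ℤ) * c * ((g : ℤ) - 1) = (d₁ : ℤ) * (g : ℤ) ^ n₁ - ((d₁ : ℤ) + ((g : ℤ) - 1)) := by
    linear_combination hbc
  have h2 : (a : ℤ) * c * ((g : ℤ) - 1) = (d₂ : ℤ) * (g : ℤ) ^ (n₁ + m) - ((d₂ : ℤ) + ((g : ℤ) - 1)) := by
    linear_combination hac
  have h3 : (a : ℤ) * b * ((g : ℤ) - 1) = (d₃ : ℤ) * (g : ℤ) ^ (n₁ + m + k) - ((d₃ : ℤ) + ((g : ℤ) - 1)) := by
    linear_combination hab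
  exact key (g : ℤ) (a : ℤ) (b : ℤ) (c : ℤ) (d₁ : ℤ) (d₂ : ℤ) (d₃ : ℤ) n₁ m k
    (by exact_mod_cast hg) (by exact_mod_cast hc) (by exact_mod_cast hcb) (by exact_mod_cast hba)
    (by exact_mod_cast hd₁) hd₁' (by exact_mod_cast hd₂) hd₂' (by exact_mod_cast hd₃) hd₃'
    hn₁ h1 h2 h3
end

section
/- Let g ≥ 2 be an integer and suppose positive integers a > b > c, digits d₁, d₂, d₃ ∈ {1,…,g−1} and integers n₁, n₂, n₃ ≥ 2 with n₁ ≤ n₂ ≤ n₃ satisfy ab+1 = d₃(g^{n₃}−1)/(g−1), ac+1 = d₂(g^{n₂}−1)/(g−1) and bc+1 = d₁(g^{n₁}−1)/(g−1). If g ≥ 200 then n₃ ≤ 143, and if g ≥ 10^6 then n₃ ≤ 124. -/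
private lemma exp_le_of_pow_le' {G : ℤ} (hG : 200 ≤ G) {s t : ℕ}
    (h : G^s ≤ 24*G^t) : s ≤ t := by
  by_contra hst
  push_neg at hst
  have h1 : G^(t+1) ≤ G^s := pow_le_pow_right₀ (by linarith) (by omega)
  have h2 : (0:ℤ) < G^t := by positivity
  rw [pow_succ] at h1
  have h3 : (0:ℤ) ≤ (G - 200) * G^t := mul_nonneg (by linarith) (le_of_lt h2)
  have r : (G - 200) * G^t = G^t*G - 200*G^t := by ring
  linarith [h1, h2, h]

set_option maxHeartbeats 1000000 in
private lemma key_bound_int (G a b c d₁ d₂ d₃ : ℤ) (n₁ p q : ℕ)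
    (hG : 200 ≤ G)
    (hc : 1 ≤ c) (hcb : c < b) (hba : b < a)
    (hd₁Z : 1 ≤ d₁) (hd₁g : d₁ + 1 ≤ G)
    (hd₂Z : 1 ≤ d₂) (hd₂g : d₂ + 1 ≤ G)
    (hd₃Z : 1 ≤ d₃) (hd₃g : d₃ + 1 ≤ G)
    (hn₁ : 2 ≤ n₁)
    (e1 : (G-1)*(b*c) = d₁*G^n₁ - (d₁ + G - 1))
    (e2 : (G-1)*(a*c) = d₂*G^(n₁+p) - (d₂ + G - 1))
    (e3 : (G-1)*(a*b) = d₃*G^(n₁+p+q) - (d₃ + G - 1)) :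
    n₁ + p + q ≤ 9 := by
  have hP1 : (0:ℤ) < G^n₁ := by positivity
  have hP2 : (0:ℤ) < G^(n₁+p) := by positivity
  have hP3 : (0:ℤ) < G^(n₁+p+q) := by positivity
  have hG2n2 : G^2 ≤ G^(n₁+p) := pow_le_pow_right₀ (by linarith) (by omega)
  have hG2n3 : G^2 ≤ G^(n₁+p+q) := pow_le_pow_right₀ (by linarith) (by omega)
  have hA2G : d₁ + G - 1 ≤ 2*G := by linarith
  have hB2G : d₂ + G - 1 ≤ 2*G := by linarith
  have hC2G : d₃ + G - 1 ≤ 2*G := by linarith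
  have hApos : (0:ℤ) < d₁ + G - 1 := by linarith
  have hBpos : (0:ℤ) < d₂ + G - 1 := by linarith
  have hCpos : (0:ℤ) < d₃ + G - 1 := by linarith
  have hb0 : (0:ℤ) < b := by linarith
  have ha0 : (0:ℤ) < a := by linarith
  have hc0 : (0:ℤ) < c := by linarith
  -- product identities
  have D3 : (G-1)*c^2*(d₃*G^(n₁+p+q) - (d₃ + G - 1))
      = (d₁*G^n₁ - (d₁ + G - 1)) * (d₂*G^(n₁+p) - (d₂ + G - 1)) := by
    linear_combination (G-1)*a*c*e1 + (d₁*G^n₁ - (d₁ + G - 1))*e2 - (G-1)*c^2*e3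
  have D2 : (G-1)*b^2*(d₂*G^(n₁+p) - (d₂ + G - 1))
      = (d₁*G^n₁ - (d₁ + G - 1)) * (d₃*G^(n₁+p+q) - (d₃ + G - 1)) := by
    linear_combination (G-1)*a*b*e1 + (d₁*G^n₁ - (d₁ + G - 1))*e3 - (G-1)*b^2*e2
  -- nonnegativity / upper bounds of bracketed factors
  have f1nn : (0:ℤ) ≤ d₁*G^n₁ - (d₁ + G - 1) := by
    rw [← e1]; exact mul_nonneg (by linarith) (by positivity)
  have f2nn : (0:ℤ) ≤ d₂*G^(n₁+p) - (d₂ + G - 1) := by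
    rw [← e2]; exact mul_nonneg (by linarith) (by positivity)
  have f3nn : (0:ℤ) ≤ d₃*G^(n₁+p+q) - (d₃ + G - 1) := by
    rw [← e3]; exact mul_nonneg (by linarith) (by positivity)
  have f1ub : d₁*G^n₁ - (d₁ + G - 1) ≤ G^(n₁+1) := by
    have h1 : d₁*G^n₁ ≤ G*G^n₁ :=
      mul_le_mul_of_nonneg_right (by linarith) (by positivity)
    have h2 : G*G^n₁ = G^(n₁+1) := by ring
    linarith
  have f2ub : d₂*G^(n₁+p) - (d₂ + G - 1) ≤ G^(n₁+p+1) := by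
    have h1 : d₂*G^(n₁+p) ≤ G*G^(n₁+p) :=
      mul_le_mul_of_nonneg_right (by linarith) (by positivity)
    have h2 : G*G^(n₁+p) = G^(n₁+p+1) := by ring
    linarith
  have f3ub : d₃*G^(n₁+p+q) - (d₃ + G - 1) ≤ G^(n₁+p+q+1) := by
    have h1 : d₃*G^(n₁+p+q) ≤ G*G^(n₁+p+q) :=
      mul_le_mul_of_nonneg_right (by linarith) (by positivity)
    have h2 : G*G^(n₁+p+q) = G^(n₁+p+q+1) := by ring
    linarith
  have h4G : 4*G ≤ G^2 := by
    have := mul_nonneg (by linarith : (0:ℤ) ≤ G - 4) (by linarith : (0:ℤ) ≤ G)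
    have r : (G-4)*G = G^2 - 4*G := by ring
    linarith
  have f2lb : G^(n₁+p) ≤ 2*(d₂*G^(n₁+p) - (d₂ + G - 1)) := by
    have t1 : (0:ℤ) ≤ (2*d₂ - 2)*G^(n₁+p) :=
      mul_nonneg (by linarith) (le_of_lt hP2)
    have r : (2*d₂ - 2)*G^(n₁+p) = 2*d₂*G^(n₁+p) - 2*G^(n₁+p) := by ring
    linarith [hG2n2]
  have f3lb : G^(n₁+p+q) ≤ 2*(d₃*G^(n₁+p+q) - (d₃ + G - 1)) := by
    have t1 : (0:ℤ) ≤ (2*d₃ - 2)*G^(n₁+p+q) :=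
      mul_nonneg (by linarith) (le_of_lt hP3)
    have r : (2*d₃ - 2)*G^(n₁+p+q) = 2*d₃*G^(n₁+p+q) - 2*G^(n₁+p+q) := by ring
    linarith [hG2n3]
  have hc2 : (1:ℤ) ≤ c^2 := by
    have u : (1:ℤ)*1 ≤ c*c := mul_le_mul hc hc (by linarith) (by linarith)
    have r : c*c = c^2 := by ring
    linarith
  ------------------------------------------------------------------
  -- PART 1 :  q ≤ 3
  ------------------------------------------------------------------
  have hW : (G-1)*c^2*(d₃ + G - 1) + (d₁ + G - 1)*(d₂ + G - 1)
      = G^n₁ * ((G-1)*c^2*d₃*G^(p+q) - d₁*d₂*G^(n₁+p)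
        + d₁*(d₂ + G - 1) + d₂*(d₁ + G - 1)*G^p) := by
    linear_combination -D3
  have hWpos : (0:ℤ) < (G-1)*c^2*(d₃ + G - 1) + (d₁ + G - 1)*(d₂ + G - 1) := by
    have t1 : (0:ℤ) < (G-1)*c^2*(d₃ + G - 1) :=
      mul_pos (mul_pos (by linarith) (by positivity)) hCpos
    linarith [mul_pos hApos hBpos]
  have hW1 : (1:ℤ) ≤ (G-1)*c^2*d₃*G^(p+q) - d₁*d₂*G^(n₁+p)
        + d₁*(d₂ + G - 1) + d₂*(d₁ + G - 1)*G^p := by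
    by_contra hWle
    push_neg at hWle
    have hW0 : (G-1)*c^2*d₃*G^(p+q) - d₁*d₂*G^(n₁+p)
        + d₁*(d₂ + G - 1) + d₂*(d₁ + G - 1)*G^p ≤ 0 := by linarith
    have hneg : G^n₁ * ((G-1)*c^2*d₃*G^(p+q) - d₁*d₂*G^(n₁+p)
        + d₁*(d₂ + G - 1) + d₂*(d₁ + G - 1)*G^p) ≤ 0 :=
      mul_nonpos_of_nonneg_of_nonpos (le_of_lt hP1) hW0
    linarith [hW, hWpos]
  have hclow : G^n₁ ≤ 6*G^2*c^2 := by
    have hWge : G^n₁ ≤ (G-1)*c^2*(d₃ + G - 1) + (d₁ + G - 1)*(d₂ + G - 1) := by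
      rw [hW]
      exact le_mul_of_one_le_right (le_of_lt hP1) hW1
    have u1 : (G-1)*c^2*(d₃ + G - 1) ≤ G*c^2*(2*G) := by
      have s1 : (G-1)*c^2 ≤ G*c^2 :=
        mul_le_mul_of_nonneg_right (by linarith) (by positivity)
      have s2 : (G-1)*c^2*(d₃ + G - 1) ≤ G*c^2*(d₃ + G - 1) :=
        mul_le_mul_of_nonneg_right s1 (by linarith)
      have s3 : G*c^2*(d₃ + G - 1) ≤ G*c^2*(2*G) :=
        mul_le_mul_of_nonneg_left hC2G (by positivity)
      linarith
    have u2 : (d₁ + G - 1)*(d₂ + G - 1) ≤ (2*G)*(2*G) :=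
      mul_le_mul hA2G hB2G (by linarith) (by linarith)
    have u3 : (2*G)*(2*G) ≤ (2*G)*(2*G)*c^2 :=
      le_mul_of_one_le_right (by positivity) hc2
    have r1 : G*c^2*(2*G) + (2*G)*(2*G)*c^2 = 6*G^2*c^2 := by ring
    linarith
  have hcu : G*G^(n₁+p+q)*c^2 ≤ 4*(G^(n₁+1)*G^(n₁+p+1)) := by
    have rhs_le : (d₁*G^n₁ - (d₁ + G - 1)) * (d₂*G^(n₁+p) - (d₂ + G - 1))
        ≤ G^(n₁+1)*G^(n₁+p+1) := mul_le_mul f1ub f2ub f2nn (by positivity)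
    have comb : G*G^(n₁+p+q) ≤ (2*(G-1))*(2*(d₃*G^(n₁+p+q) - (d₃ + G - 1))) :=
      mul_le_mul (by linarith) f3lb (le_of_lt hP3) (by linarith)
    have comb2 : G*G^(n₁+p+q)*c^2
        ≤ (2*(G-1))*(2*(d₃*G^(n₁+p+q) - (d₃ + G - 1)))*c^2 :=
      mul_le_mul_of_nonneg_right comb (by positivity)
    have r2 : (2*(G-1))*(2*(d₃*G^(n₁+p+q) - (d₃ + G - 1)))*c^2
        = 4*((G-1)*c^2*(d₃*G^(n₁+p+q) - (d₃ + G - 1))) := by ring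
    rw [r2, D3] at comb2
    linarith
  have hq3 : q ≤ 3 := by
    have m1 : G^n₁*(G*G^(n₁+p+q)) ≤ 6*G^2*c^2*(G*G^(n₁+p+q)) :=
      mul_le_mul_of_nonneg_right hclow (by positivity)
    have m2 : 6*G^2*c^2*(G*G^(n₁+p+q)) = 6*G^2*(G*G^(n₁+p+q)*c^2) := by ring
    have m3 : 6*G^2*(G*G^(n₁+p+q)*c^2) ≤ 6*G^2*(4*(G^(n₁+1)*G^(n₁+p+1))) :=
      mul_le_mul_of_nonneg_left hcu (by positivity)
    have m4 : G^n₁*(G*G^(n₁+p+q)) = G^(n₁+(n₁+p+q)+1) := by ring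
    have m5 : 6*G^2*(4*(G^(n₁+1)*G^(n₁+p+1))) = 24*G^(n₁+(n₁+p)+4) := by ring
    have hfin : G^(n₁+(n₁+p+q)+1) ≤ 24*G^(n₁+(n₁+p)+4) := by
      rw [← m4, ← m5]; linarith
    have := exp_le_of_pow_le' hG hfin
    omega
  ------------------------------------------------------------------
  -- PART 2 :  3(n₁+p) + 1 ≤ n₁ + (n₁+p+q) + 4
  ------------------------------------------------------------------
  have idBC : b*(d₂*G^(n₁+p) - (d₂ + G - 1)) = c*(d₃*G^(n₁+p+q) - (d₃ + G - 1)) := by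
    linear_combination c*e3 - b*e2
  have hK : b*(d₂ + G - 1) - c*(d₃ + G - 1) = G^(n₁+p) * (b*d₂ - c*d₃*G^q) := by
    linear_combination -idBC
  have hKne : b*d₂ - c*d₃*G^q ≠ 0 := by
    intro h0
    have hbd : b*d₂ = c*d₃*G^q := by linarith [sub_eq_zero.mp h0]
    have hbBcC : b*(d₂ + G - 1) = c*(d₃ + G - 1) := by
      rw [h0, mul_zero] at hK; linarith
    have hbc0 : (b*c) ≠ 0 := by positivity
    have hcancel : d₂*(d₃ + G - 1) = d₃*G^q*(d₂ + G - 1) := by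
      have h1 : (b*c) * (d₂*(d₃ + G - 1)) = (b*c) * (d₃*G^q*(d₂ + G - 1)) := by
        linear_combination (c*(d₃ + G - 1))*hbd - (c*d₃*G^q)*hbBcC
      exact mul_left_cancel₀ hbc0 h1
    rcases Nat.eq_zero_or_pos q with hq0 | hq1
    · subst hq0
      simp only [pow_zero, mul_one] at hcancel
      have hz : (d₂ - d₃)*(G-1) = 0 := by linear_combination hcancel
      have hd23 : d₂ = d₃ := by
        rcases mul_eq_zero.mp hz with h | h
        · linarith
        · linarith
      have hbceq : b = c := by
        have hne : (d₂ + G - 1) ≠ 0 := by linarith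
        apply mul_right_cancel₀ hne
        rw [hbBcC, hd23]
      linarith
    · have hGq : G ≤ G^q := by
        calc G = G^1 := (pow_one G).symm
        _ ≤ G^q := pow_le_pow_right₀ (by linarith) hq1
      have h1 : d₃*G*(d₂ + G - 1) ≤ d₃*G^q*(d₂ + G - 1) := by
        have s1 : d₃*G ≤ d₃*G^q := mul_le_mul_of_nonneg_left hGq (by linarith)
        exact mul_le_mul_of_nonneg_right s1 (by linarith)
      have h2 : d₂*(d₃ + G - 1) < d₃*G*(d₂ + G - 1) := by
        have t0 : (0:ℤ) ≤ (d₃ - 1)*G := mul_nonneg (by linarith) (by linarith)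
        have t1 : (0:ℤ) ≤ (d₂*d₃ - 1)*(G - 1) := by
          have u : (1:ℤ)*1 ≤ d₂*d₃ := mul_le_mul hd₂Z hd₃Z (by linarith) (by linarith)
          exact mul_nonneg (by linarith) (by linarith)
        have t2 : (0:ℤ) ≤ (G - 1)*(d₃*G - d₂ - 1) :=
          mul_nonneg (by linarith) (by linarith [t0])
        linarith [t1, t2]
      linarith
  have hb2G : G^(n₁+p) ≤ 2*G*b := by
    have hcC0 : (0:ℤ) ≤ c*(d₃ + G - 1) := mul_nonneg (by linarith) (by linarith)
    have hbB0 : (0:ℤ) ≤ b*(d₂ + G - 1) := mul_nonneg (by linarith) (by linarith)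
    have hbB2G : b*(d₂ + G - 1) ≤ b*(2*G) :=
      mul_le_mul_of_nonneg_left hB2G (by linarith)
    have hcC2G : c*(d₃ + G - 1) ≤ c*(2*G) :=
      mul_le_mul_of_nonneg_left hC2G (by linarith)
    have hr2 : c*(2*G) ≤ b*(2*G) :=
      mul_le_mul_of_nonneg_right (by linarith) (by linarith)
    rcases hKne.lt_or_gt with hneg | hpos
    · have hK1 : b*d₂ - c*d₃*G^q ≤ -1 := by linarith [Int.lt_iff_add_one_le.mp hneg]
      have hm : G^(n₁+p) * (b*d₂ - c*d₃*G^q) ≤ G^(n₁+p) * (-1) :=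
        mul_le_mul_of_nonneg_left hK1 (le_of_lt hP2)
      have hcCge : G^(n₁+p) ≤ c*(d₃ + G - 1) := by linarith [hK, hbB0, hm]
      linarith
    · have hK1 : (1:ℤ) ≤ b*d₂ - c*d₃*G^q := by linarith [Int.lt_iff_add_one_le.mp hpos]
      have hm : G^(n₁+p) * 1 ≤ G^(n₁+p) * (b*d₂ - c*d₃*G^q) :=
        mul_le_mul_of_nonneg_left hK1 (le_of_lt hP2)
      have hbBge : G^(n₁+p) ≤ b*(d₂ + G - 1) := by linarith [hK, hcC0, hm]
      linarith
  have hbu : G*G^(n₁+p)*b^2 ≤ 4*(G^(n₁+1)*G^(n₁+p+q+1)) := by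
    have rhs_le : (d₁*G^n₁ - (d₁ + G - 1)) * (d₃*G^(n₁+p+q) - (d₃ + G - 1))
        ≤ G^(n₁+1)*G^(n₁+p+q+1) := mul_le_mul f1ub f3ub f3nn (by positivity)
    have comb : G*G^(n₁+p) ≤ (2*(G-1))*(2*(d₂*G^(n₁+p) - (d₂ + G - 1))) :=
      mul_le_mul (by linarith) f2lb (le_of_lt hP2) (by linarith)
    have comb2 : G*G^(n₁+p)*b^2
        ≤ (2*(G-1))*(2*(d₂*G^(n₁+p) - (d₂ + G - 1)))*b^2 :=
      mul_le_mul_of_nonneg_right comb (by positivity)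
    have r2 : (2*(G-1))*(2*(d₂*G^(n₁+p) - (d₂ + G - 1)))*b^2
        = 4*((G-1)*b^2*(d₂*G^(n₁+p) - (d₂ + G - 1))) := by ring
    rw [r2, D2] at comb2
    linarith
  have h3n2 : (n₁+p)+(n₁+p)+(n₁+p)+1 ≤ n₁+(n₁+p+q)+4 := by
    have hb_sq : G^(n₁+p)*G^(n₁+p) ≤ (2*G*b)*(2*G*b) :=
      mul_le_mul hb2G hb2G (le_of_lt hP2) (by positivity)
    have m1 : (G^(n₁+p)*G^(n₁+p))*(G*G^(n₁+p)) ≤ ((2*G*b)*(2*G*b))*(G*G^(n₁+p)) :=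
      mul_le_mul_of_nonneg_right hb_sq (by positivity)
    have m2 : ((2*G*b)*(2*G*b))*(G*G^(n₁+p)) = 4*G^2*(G*G^(n₁+p)*b^2) := by ring
    have m3 : 4*G^2*(G*G^(n₁+p)*b^2) ≤ 4*G^2*(4*(G^(n₁+1)*G^(n₁+p+q+1))) :=
      mul_le_mul_of_nonneg_left hbu (by positivity)
    have m4 : (G^(n₁+p)*G^(n₁+p))*(G*G^(n₁+p)) = G^((n₁+p)+(n₁+p)+(n₁+p)+1) := by ring
    have m5 : 4*G^2*(4*(G^(n₁+1)*G^(n₁+p+q+1))) = 16*G^(n₁+(n₁+p+q)+4) := by ring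
    have hP4 : (0:ℤ) ≤ G^(n₁+(n₁+p+q)+4) := by positivity
    have hfin : G^((n₁+p)+(n₁+p)+(n₁+p)+1) ≤ 24*G^(n₁+(n₁+p+q)+4) := by
      rw [← m4]; linarith [m1, m2, m3, m5, hP4]
    exact exp_le_of_pow_le' hG hfin
  omega

private lemma repdigit_cast_eq' {g x d n : ℕ} (hg : 2 ≤ g)
    (h : (x + 1) * (g - 1) = d * (g ^ n - 1)) :
    ((g:ℤ)-1)*(x:ℤ) = (d:ℤ)*((g:ℤ))^n - ((d:ℤ) + (g:ℤ) - 1) := by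
  have h1 : (1:ℕ) ≤ g := by omega
  have h2 : (1:ℕ) ≤ g ^ n := Nat.one_le_pow _ _ (by omega)
  have hc := congrArg (fun t : ℕ => (t:ℤ)) h
  push_cast [Nat.cast_sub h1, Nat.cast_sub h2] at hc
  linarith

theorem stmt_6 (g a b c d₁ d₂ d₃ n₁ n₂ n₃ : ℕ) (hg : 2 ≤ g)
    (hc : 0 < c) (hcb : c < b) (hba : b < a)
    (hd₁ : 1 ≤ d₁) (hd₁' : d₁ ≤ g - 1) (hd₂ : 1 ≤ d₂) (hd₂' : d₂ ≤ g - 1)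
    (hd₃ : 1 ≤ d₃) (hd₃' : d₃ ≤ g - 1)
    (hn₁ : 2 ≤ n₁) (hn₁₂ : n₁ ≤ n₂) (hn₂₃ : n₂ ≤ n₃)
    (hab : (a * b + 1) * (g - 1) = d₃ * (g ^ n₃ - 1))
    (hac : (a * c + 1) * (g - 1) = d₂ * (g ^ n₂ - 1))
    (hbc : (b * c + 1) * (g - 1) = d₁ * (g ^ n₁ - 1)) :
    (200 ≤ g → n₃ ≤ 143) ∧ (10 ^ 6 ≤ g → n₃ ≤ 124) := by
  have main : 200 ≤ g → n₃ ≤ 9 := by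
    intro h200
    obtain ⟨p, rfl⟩ := Nat.exists_eq_add_of_le hn₁₂
    obtain ⟨q, rfl⟩ := Nat.exists_eq_add_of_le hn₂₃
    have hG : (200:ℤ) ≤ (g:ℤ) := by exact_mod_cast h200
    have hcZ : (1:ℤ) ≤ (c:ℤ) := by exact_mod_cast hc
    have hcbZ : ((c:ℕ):ℤ) < (b:ℤ) := by exact_mod_cast hcb
    have hbaZ : ((b:ℕ):ℤ) < (a:ℤ) := by exact_mod_cast hba
    have hd₁Z : (1:ℤ) ≤ (d₁:ℤ) := by exact_mod_cast hd₁
    have hd₂Z : (1:ℤ) ≤ (d₂:ℤ) := by exact_mod_cast hd₂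
    have hd₃Z : (1:ℤ) ≤ (d₃:ℤ) := by exact_mod_cast hd₃
    have hd₁g : (d₁:ℤ) + 1 ≤ (g:ℤ) := by exact_mod_cast (by omega : d₁ + 1 ≤ g)
    have hd₂g : (d₂:ℤ) + 1 ≤ (g:ℤ) := by exact_mod_cast (by omega : d₂ + 1 ≤ g)
    have hd₃g : (d₃:ℤ) + 1 ≤ (g:ℤ) := by exact_mod_cast (by omega : d₃ + 1 ≤ g)
    have e1 : ((g:ℤ)-1)*((b:ℤ)*(c:ℤ)) = (d₁:ℤ)*((g:ℤ))^n₁ - ((d₁:ℤ) + (g:ℤ) - 1) := by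
      have := repdigit_cast_eq' hg hbc; push_cast at this ⊢; linarith
    have e2 : ((g:ℤ)-1)*((a:ℤ)*(c:ℤ)) = (d₂:ℤ)*((g:ℤ))^(n₁+p) - ((d₂:ℤ) + (g:ℤ) - 1) := by
      have := repdigit_cast_eq' hg hac; push_cast at this ⊢; linarith
    have e3 : ((g:ℤ)-1)*((a:ℤ)*(b:ℤ)) = (d₃:ℤ)*((g:ℤ))^(n₁+p+q) - ((d₃:ℤ) + (g:ℤ) - 1) := by
      have := repdigit_cast_eq' hg hab; push_cast at this ⊢; linarith
    exact key_bound_int (g:ℤ) (a:ℤ) (b:ℤ) (c:ℤ) (d₁:ℤ) (d₂:ℤ) (d₃:ℤ) n₁ p q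
      hG hcZ hcbZ hbaZ hd₁Z hd₁g hd₂Z hd₂g hd₃Z hd₃g hn₁ e1 e2 e3
  constructor
  · intro h200
    have := main h200
    omega
  · intro h1e6
    have := main (by omega)
    omega
end

section
/- Let g ≥ 2 be an integer and suppose positive integers a > b > c, digits d₂, d₃ ∈ {1,…,g−1} and integers n₂, n₃ ≥ 2 satisfy ab+1 = d₃(g^{n₃}−1)/(g−1) and ac+1 = d₂(g^{n₂}−1)/(g−1) with n₂ ≤ n₃. Then n₃ ≤ 2·n₂. -/
theorem stmt_8 (g a b c d₂ d₃ n₂ n₃ : ℕ) (hg : 2 ≤ g)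
    (hc : 0 < c) (hcb : c < b) (hba : b < a)
    (hd₂ : 1 ≤ d₂) (hd₂' : d₂ ≤ g - 1) (hd₃ : 1 ≤ d₃) (hd₃' : d₃ ≤ g - 1)
    (hn₂ : 2 ≤ n₂) (hn₃ : 2 ≤ n₃) (hn₂₃ : n₂ ≤ n₃)
    (hab : (a * b + 1) * (g - 1) = d₃ * (g ^ n₃ - 1))
    (hac : (a * c + 1) * (g - 1) = d₂ * (g ^ n₂ - 1)) :
    n₃ ≤ 2 * n₂ := by
  have hgpos : 0 < g - 1 := by omega
  -- g^(n₃-1) * (g-1) ≤ g^n₃ - 1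
  have hsplit : g ^ n₃ = g ^ (n₃ - 1) * g := by
    rw [← pow_succ]; congr 1; omega
  have hp1 : 1 ≤ g ^ (n₃ - 1) := Nat.one_le_pow _ _ (by omega)
  have hpow3 : g ^ (n₃ - 1) * (g - 1) ≤ g ^ n₃ - 1 := by
    have : g ^ (n₃ - 1) * (g - 1) = g ^ (n₃ - 1) * g - g ^ (n₃ - 1) := by
      rw [Nat.mul_sub, Nat.mul_one]
    rw [this, ← hsplit]
    have : g ^ (n₃ - 1) ≤ g ^ n₃ := Nat.pow_le_pow_right (by omega) (by omega)
    omega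
  -- lower bound: g^(n₃-1) ≤ a*b+1
  have h1 : g ^ (n₃ - 1) ≤ a * b + 1 := by
    have : g ^ (n₃ - 1) * (g - 1) ≤ (a * b + 1) * (g - 1) := by
      rw [hab]
      calc g ^ (n₃ - 1) * (g - 1) ≤ g ^ n₃ - 1 := hpow3
        _ = 1 * (g ^ n₃ - 1) := (one_mul _).symm
        _ ≤ d₃ * (g ^ n₃ - 1) := Nat.mul_le_mul_right _ hd₃
    exact Nat.le_of_mul_le_mul_right this hgpos
  -- upper bound: a*c+1 ≤ g^n₂ - 1
  have h2 : a * c + 1 ≤ g ^ n₂ - 1 := by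
    have h : (a * c + 1) * (g - 1) ≤ (g ^ n₂ - 1) * (g - 1) := by
      rw [hac, mul_comm (g ^ n₂ - 1) (g - 1)]
      exact Nat.mul_le_mul_right _ hd₂'
    exact Nat.le_of_mul_le_mul_right h hgpos
  have ha : a < g ^ n₂ := by
    have : a ≤ a * c := Nat.le_mul_of_pos_right a hc
    omega
  -- combine
  have h3 : a * b + 1 ≤ a * a := by
    have h4 : a * (b + 1) ≤ a * a := Nat.mul_le_mul_left a (by omega)
    have : 1 ≤ a := by omega
    nlinarith
  have h5 : g ^ (n₃ - 1) < g ^ (2 * n₂) := by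
    calc g ^ (n₃ - 1) ≤ a * a := le_trans h1 h3
      _ < g ^ n₂ * g ^ n₂ := Nat.mul_lt_mul_of_lt_of_lt ha ha
      _ = g ^ (2 * n₂) := by rw [← pow_add]; congr 1; omega
  have := (Nat.pow_lt_pow_iff_right (by omega : 1 < g)).mp h5
  omega
end

section
/- Let g ≥ 3 be an integer and suppose positive integers a > b > c, digits d₂, d₃ ∈ {1,…,g−1} and integers n₂, n₃ ≥ 2 with n₂ ≤ n₃ satisfy ab+1 = d₃(g^{n₃}−1)/(g−1) and ac+1 = d₂(g^{n₂}−1)/(g−1). If the rational numbers d₃·g^{n₃}/(d₃+g−1) and d₂·g^{n₂}/(d₂+g−1) are multiplicatively independent, then n₃ ≤ 178. -/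
private lemma numeric1 (g : ℤ) (hg : 3 ≤ g) :
    (2 * (g - 1) - 1) * (2 * (g - 1)) ≤ 4 * g ^ 3 := by
  nlinarith [mul_nonneg (by linarith : (0:ℤ) ≤ g - 3) (by positivity : (0:ℤ) ≤ g ^ 2),
    sq_nonneg g]

private lemma numeric2 (g : ℤ) (hg : 3 ≤ g) :
    (2 * (g - 1) - 1) * (g - 1) * (2 * (g - 1)) ≤ 4 * g ^ 3 := by nlinarith

private lemma numeric3 (g : ℤ) (hg : 3 ≤ g) : 4 * g ^ 3 < g ^ 5 := by
  have h1 : (9:ℤ) ≤ g ^ 2 := by nlinarith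
  have h2 : (0:ℤ) < g ^ 3 := by positivity
  nlinarith [mul_le_mul_of_nonneg_right h1 h2.le]

private lemma numeric4 (g : ℤ) (hg : 3 ≤ g) : 9 ≤ g ^ 2 := by nlinarith

set_option maxHeartbeats 1000000 in
theorem stmt_11 (g a b c d₂ d₃ n₂ n₃ : ℕ) (hg : 3 ≤ g)
    (hc : 0 < c) (hcb : c < b) (hba : b < a)
    (hd₂ : 1 ≤ d₂) (hd₂' : d₂ ≤ g - 1) (hd₃ : 1 ≤ d₃) (hd₃' : d₃ ≤ g - 1)
    (hn₂ : 2 ≤ n₂) (hn₃ : 2 ≤ n₃) (hn₂₃ : n₂ ≤ n₃)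
    (hab : (a * b + 1) * (g - 1) = d₃ * (g ^ n₃ - 1))
    (hac : (a * c + 1) * (g - 1) = d₂ * (g ^ n₂ - 1))
    (hind : MultIndep ((d₃ : ℚ) * g ^ n₃ / (d₃ + g - 1)) ((d₂ : ℚ) * g ^ n₂ / (d₂ + g - 1))) :
    n₃ ≤ 178 := by
  -- pass to ℤ
  obtain ⟨k, hk⟩ : ∃ k, n₃ = n₂ + k := ⟨n₃ - n₂, by omega⟩
  have hg1 : 1 ≤ g := by omega
  have hp3 : 1 ≤ g ^ n₃ := Nat.one_le_pow _ _ (by omega)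
  have hp2 : 1 ≤ g ^ n₂ := Nat.one_le_pow _ _ (by omega)
  zify [hg1, hp3, hp2] at hab hac hd₂' hd₃'
  rw [hk, pow_add] at hab
  have hgZ : (3:ℤ) ≤ (g:ℤ) := by exact_mod_cast hg
  have hcZ : (1:ℤ) ≤ (c:ℤ) := by exact_mod_cast hc
  have hcbZ : (c:ℤ) + 1 ≤ (b:ℤ) := by exact_mod_cast hcb
  have hbaZ : (b:ℤ) + 1 ≤ (a:ℤ) := by exact_mod_cast hba
  have hd2Z : (1:ℤ) ≤ (d₂:ℤ) := by exact_mod_cast hd₂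
  have hd3Z : (1:ℤ) ≤ (d₃:ℤ) := by exact_mod_cast hd₃
  set P : ℤ := (g:ℤ) ^ n₂ with hPdef
  set Q : ℤ := (g:ℤ) ^ k with hQdef
  have hQ1 : (1:ℤ) ≤ Q := one_le_pow₀ (by linarith only [hgZ])
  have hP9 : (9:ℤ) ≤ P := by
    have h1 : ((g:ℤ))^2 ≤ (g:ℤ)^n₂ := pow_le_pow_right₀ (by linarith only [hgZ]) hn₂
    have h2 := numeric4 (g:ℤ) hgZ
    linarith only [h1, h2]
  have hcd31 : (1:ℤ) ≤ (c:ℤ) * d₃ := by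
    have h0 := mul_le_mul hcZ hd3Z zero_le_one (by linarith only [hcZ])
    linarith only [h0]
  -- the small positive integer f
  obtain ⟨f, hfdef⟩ : ∃ f : ℤ, f = (b:ℤ) * d₂ - (c:ℤ) * d₃ * Q := ⟨_, rfl⟩
  -- key identity 1 : f * (P - 1) = (g-1)(b-c) + c d₃ (Q - 1)
  have h1 : f * (P - 1) = ((g:ℤ) - 1) * ((b:ℤ) - c) + (c:ℤ) * d₃ * (Q - 1) := by
    linear_combination (P - 1) * hfdef + (c:ℤ) * hab - (b:ℤ) * hac
  -- key identity 2 : b (d₂ + g - 1) = c (d₃ + g - 1) + f P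
  have h2 : (b:ℤ) * ((d₂:ℤ) + (g:ℤ) - 1) = (c:ℤ) * ((d₃:ℤ) + (g:ℤ) - 1) + f * P := by
    linear_combination (-P) * hfdef + (b:ℤ) * hac - (c:ℤ) * hab
  have hQm : (0:ℤ) ≤ (c:ℤ) * d₃ * (Q - 1) :=
    mul_nonneg (mul_nonneg (by linarith only [hcZ]) (by linarith only [hd3Z]))
      (by linarith only [hQ1])
  -- positivity of f
  have hf1 : (1:ℤ) ≤ f := by
    rcases le_or_gt 1 f with h | h
    · exact h
    · exfalso
      have hnegf : 0 ≤ (-f) * (P - 1) :=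
        mul_nonneg (by linarith only [h]) (by linarith only [hP9])
      have h12 : 2 ≤ ((g:ℤ) - 1) * ((b:ℤ) - c) := by
        nlinarith only [hgZ, hcbZ]
      linarith only [h1, hQm, hnegf, h12]
  -- a*c + 1 ≤ P - 1
  have hacP : (a:ℤ) * c + 1 ≤ P - 1 := by
    nlinarith only [hac, hgZ, hP9,
      mul_nonneg (sub_nonneg.mpr hd₂') (by linarith only [hP9] : (0:ℤ) ≤ P - 1)]
  have hbP : (b:ℤ) ≤ P - 3 := by
    nlinarith only [hacP, hcZ, hbaZ, hcbZ,
      mul_nonneg (by linarith only [hbaZ, hcbZ, hcZ] : (0:ℤ) ≤ (a:ℤ))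
        (by linarith only [hcZ] : (0:ℤ) ≤ (c:ℤ) - 1)]
  -- c d₃ Q ≤ b d₂ - 1  (since f ≥ 1)
  have hcd3Q : (c:ℤ) * d₃ * Q ≤ (b:ℤ) * d₂ - 1 := by
    have h0 := hfdef ▸ hf1
    linarith only [h0]
  -- P ≤ 2 (g-1) b
  have hPle : P ≤ 2 * ((g:ℤ) - 1) * b := by
    nlinarith only [h2, hf1, hP9, hd₂', hgZ, hcZ, hd3Z,
      mul_nonneg (by linarith only [hf1] : (0:ℤ) ≤ f - 1) (by linarith only [hP9] : (0:ℤ) ≤ P),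
      mul_nonneg (by linarith only [hcbZ, hcZ] : (0:ℤ) ≤ (b:ℤ))
        (by linarith only [hd₂'] : (0:ℤ) ≤ ((g:ℤ) - 1) - d₂),
      mul_nonneg (by linarith only [hcZ] : (0:ℤ) ≤ (c:ℤ))
        (by linarith only [hd3Z, hgZ] : (0:ℤ) ≤ (d₃:ℤ) + (g:ℤ) - 1)]
  -- c ≤ 2(g-1) - 1
  have hbc : (b:ℤ) * c + 1 ≤ (a:ℤ) * c := by
    nlinarith only [hbaZ, hcZ,
      mul_le_mul_of_nonneg_right hbaZ (by linarith only [hcZ] : (0:ℤ) ≤ (c:ℤ))]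
  have hcle : (c:ℤ) ≤ 2 * ((g:ℤ) - 1) - 1 := by
    by_contra hcon
    push_neg at hcon
    have h5 : P * c ≤ (2 * ((g:ℤ) - 1) * b) * c :=
      mul_le_mul_of_nonneg_right hPle (by linarith only [hcZ])
    have h6 : (2 * ((g:ℤ) - 1)) * ((b:ℤ) * c) ≤ (2 * ((g:ℤ) - 1)) * ((a:ℤ) * c - 1) :=
      mul_le_mul_of_nonneg_left (by linarith only [hbc]) (by linarith only [hgZ])
    have h7 : (2 * ((g:ℤ) - 1)) * ((a:ℤ) * c - 1) ≤ (2 * ((g:ℤ) - 1)) * (P - 3) :=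
      mul_le_mul_of_nonneg_left (by linarith only [hacP]) (by linarith only [hgZ])
    have h8 : (2 * ((g:ℤ) - 1)) * P ≤ c * P :=
      mul_le_mul_of_nonneg_right (by linarith only [hcon]) (by linarith only [hP9])
    nlinarith only [h5, h6, h7, h8, hgZ]
  -- f ≤ 2(g-1) - 1
  have hfle : f ≤ 2 * ((g:ℤ) - 1) - 1 := by
    by_contra hcon
    push_neg at hcon
    have h5 : (2 * ((g:ℤ) - 1)) * (P - 1) ≤ f * (P - 1) :=
      mul_le_mul_of_nonneg_right (by linarith only [hcon]) (by linarith only [hP9])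
    have h6 : (0:ℤ) ≤ (b:ℤ) * (((g:ℤ) - 1) - d₂) :=
      mul_nonneg (by linarith only [hcbZ, hcZ]) (by linarith only [hd₂'])
    have h7 : (2 * ((g:ℤ) - 1)) * b ≤ (2 * ((g:ℤ) - 1)) * (P - 3) :=
      mul_le_mul_of_nonneg_left hbP (by linarith only [hgZ])
    have h9 : (0:ℤ) ≤ ((g:ℤ) - 1) * c :=
      mul_nonneg (by linarith only [hgZ]) (by linarith only [hcZ])
    linarith only [h1, h5, h6, h7, h9, hcd3Q, hcd31, hgZ]
  -- k ≤ n₂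
  have hkn : k ≤ n₂ := by
    have hQP : Q < (g:ℤ) ^ (n₂ + 1) := by
      have h5 : (g:ℤ) ^ (n₂ + 1) = P * g := by rw [hPdef, pow_succ]
      have hq1 : Q ≤ (c:ℤ) * d₃ * Q := le_mul_of_one_le_left (by linarith only [hQ1]) hcd31
      have hq2 : (b:ℤ) * d₂ ≤ b * ((g:ℤ) - 1) :=
        mul_le_mul_of_nonneg_left hd₂' (by linarith only [hcbZ, hcZ])
      have hq3 : (b:ℤ) * ((g:ℤ) - 1) ≤ (P - 3) * ((g:ℤ) - 1) :=
        mul_le_mul_of_nonneg_right hbP (by linarith only [hgZ])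
      rw [h5]
      linarith only [hq1, hq2, hq3, hcd3Q, hP9, hgZ]
    have := (pow_lt_pow_iff_right₀ (show (1:ℤ) < g by linarith only [hgZ])).mp hQP
    omega
  -- the second-level quantity S
  obtain ⟨S, hSdef⟩ : ∃ S : ℤ,
      S = (c:ℤ) * d₂ * ((d₃:ℤ) + (g:ℤ) - 1) - f * ((d₂:ℤ) + (g:ℤ) - 1) := ⟨_, rfl⟩
  have hSe : (c:ℤ) * d₃ * ((d₂:ℤ) + (g:ℤ) - 1) * Q - f * d₂ * P = S := by
    linear_combination ((d₂:ℤ) + (g:ℤ) - 1) * hfdef + (d₂:ℤ) * h2 - hSdef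
  rcases eq_or_ne S 0 with hS0 | hS0
  · -- dependent case: α = β², contradiction with hind
    exfalso
    have eqA : (c:ℤ) * d₃ * ((d₂:ℤ) + (g:ℤ) - 1) * Q = f * d₂ * P := by
      rw [hS0] at hSe; linarith only [hSe]
    have eqB : (c:ℤ) * d₂ * ((d₃:ℤ) + (g:ℤ) - 1) = f * ((d₂:ℤ) + (g:ℤ) - 1) := by
      rw [hS0] at hSdef; linarith only [hSdef]
    rw [hPdef, hQdef] at eqA
    -- move to ℚ
    have eqAq : (c:ℚ) * d₃ * ((d₂:ℚ) + (g:ℚ) - 1) * (g:ℚ)^k = (f:ℚ) * d₂ * (g:ℚ)^n₂ := by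
      exact_mod_cast congrArg (fun x : ℤ => (x:ℚ)) eqA
    have eqBq : (c:ℚ) * d₂ * ((d₃:ℚ) + (g:ℚ) - 1) = (f:ℚ) * ((d₂:ℚ) + (g:ℚ) - 1) := by
      exact_mod_cast congrArg (fun x : ℤ => (x:ℚ)) eqB
    have hgq : (3:ℚ) ≤ (g:ℚ) := by exact_mod_cast hg
    have hd2q : (1:ℚ) ≤ (d₂:ℚ) := by exact_mod_cast hd₂
    have hd3q : (1:ℚ) ≤ (d₃:ℚ) := by exact_mod_cast hd₃
    have hcq : (c:ℚ) ≠ 0 := by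
      have h0 : (0:ℚ) < c := by exact_mod_cast hc
      exact h0.ne'
    have hD3pos : (0:ℚ) < (d₃:ℚ) + (g:ℚ) - 1 := by linarith only [hd3q, hgq]
    have hD2pos : (0:ℚ) < (d₂:ℚ) + (g:ℚ) - 1 := by linarith only [hd2q, hgq]
    have hβpos : 0 < (d₂:ℚ) * (g:ℚ)^n₂ / ((d₂:ℚ) + (g:ℚ) - 1) :=
      div_pos (mul_pos (by linarith only [hd2q]) (by positivity)) hD2pos
    have hPoly2 : ((c:ℚ))^2 * ((d₃:ℚ) * ((g:ℚ)^n₂ * (g:ℚ)^k) * ((d₂:ℚ) + (g:ℚ) - 1)^2)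
        = ((c:ℚ))^2 * (((d₂:ℚ) * (g:ℚ)^n₂)^2 * ((d₃:ℚ) + (g:ℚ) - 1)) := by
      linear_combination ((c:ℚ) * (g:ℚ)^n₂ * ((d₂:ℚ) + (g:ℚ) - 1)) * eqAq
        - ((c:ℚ) * (d₂:ℚ) * ((g:ℚ)^n₂)^2) * eqBq
    have hPoly : (d₃:ℚ) * ((g:ℚ)^n₂ * (g:ℚ)^k) * ((d₂:ℚ) + (g:ℚ) - 1)^2
        = ((d₂:ℚ) * (g:ℚ)^n₂)^2 * ((d₃:ℚ) + (g:ℚ) - 1) :=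
      mul_left_cancel₀ (pow_ne_zero 2 hcq) hPoly2
    have hαβ : (d₃:ℚ) * (g:ℚ)^n₃ / ((d₃:ℚ) + (g:ℚ) - 1)
        = ((d₂:ℚ) * (g:ℚ)^n₂ / ((d₂:ℚ) + (g:ℚ) - 1)) ^ 2 := by
      rw [hk, pow_add, div_pow, div_eq_div_iff hD3pos.ne' (by positivity)]
      linear_combination hPoly
    have hβne : ((d₂:ℚ) * (g:ℚ)^n₂ / ((d₂:ℚ) + (g:ℚ) - 1)) ≠ 0 := hβpos.ne'
    have hrel : ((d₃:ℚ) * (g:ℚ)^n₃ / ((d₃:ℚ) + (g:ℚ) - 1)) ^ (1:ℤ)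
        * ((d₂:ℚ) * (g:ℚ)^n₂ / ((d₂:ℚ) + (g:ℚ) - 1)) ^ (-2:ℤ) = 1 := by
      rw [zpow_one, hαβ, show ((-2:ℤ)) = -(((2:ℕ)):ℤ) from rfl, zpow_neg, zpow_natCast]
      exact mul_inv_cancel₀ (pow_ne_zero 2 hβne)
    obtain ⟨h10', -⟩ := hind 1 (-2) hrel
    exact one_ne_zero h10'
  · -- independent case: size bounds give n₃ ≤ 12
    have hdvd : (g:ℤ)^k ∣ S := by
      rw [← hSe]
      exact dvd_sub (Dvd.intro_left _ rfl)
        (Dvd.dvd.mul_left (pow_dvd_pow (g:ℤ) hkn) _)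
    have habs : (g:ℤ)^k ≤ |S| := Int.le_of_dvd (abs_pos.mpr hS0) ((dvd_abs _ _).mpr hdvd)
    -- |S| ≤ 4 g^3
    have hcd2 : (c:ℤ) * d₂ ≤ (2 * ((g:ℤ) - 1) - 1) * ((g:ℤ) - 1) :=
      mul_le_mul hcle hd₂' (by linarith only [hd2Z]) (by linarith only [hgZ])
    have h9 : (c:ℤ) * d₂ * ((d₃:ℤ) + (g:ℤ) - 1)
        ≤ (2 * ((g:ℤ) - 1) - 1) * ((g:ℤ) - 1) * (2 * ((g:ℤ) - 1)) :=
      mul_le_mul hcd2 (by linarith only [hd₃']) (by linarith only [hd3Z, hgZ])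
        (mul_nonneg (by linarith only [hgZ]) (by linarith only [hgZ]))
    have h10 : f * ((d₂:ℤ) + (g:ℤ) - 1) ≤ (2 * ((g:ℤ) - 1) - 1) * (2 * ((g:ℤ) - 1)) :=
      mul_le_mul hfle (by linarith only [hd₂']) (by linarith only [hd2Z, hgZ])
        (by linarith only [hgZ])
    have h9n : (0:ℤ) ≤ (c:ℤ) * d₂ * ((d₃:ℤ) + (g:ℤ) - 1) :=
      mul_nonneg (mul_nonneg (by linarith only [hcZ]) (by linarith only [hd2Z]))
        (by linarith only [hd3Z, hgZ])
    have h10n : (0:ℤ) ≤ f * ((d₂:ℤ) + (g:ℤ) - 1) :=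
      mul_nonneg (by linarith only [hf1]) (by linarith only [hd2Z, hgZ])
    have hnum1 := numeric1 (g:ℤ) hgZ
    have hnum2 := numeric2 (g:ℤ) hgZ
    have hSabs : |S| ≤ 4 * (g:ℤ)^3 := by
      rw [hSdef, abs_le]
      constructor
      · linarith only [h10, h9n, hnum1]
      · linarith only [h9, h10n, hnum2]
    have hk4 : k ≤ 4 := by
      have h5 : (g:ℤ)^k < (g:ℤ)^5 := by
        have h6 := numeric3 (g:ℤ) hgZ
        have h7 : (g:ℤ)^k ≤ |S| := habs
        rw [hQdef] at hQ1
        linarith only [h6, h7, hSabs]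
      have := (pow_lt_pow_iff_right₀ (show (1:ℤ) < g by linarith only [hgZ])).mp h5
      omega
    have hn2k : n₂ ≤ k + 4 := by
      have hcd3' : (c:ℤ) * d₃ ≤ (2 * ((g:ℤ) - 1) - 1) * ((g:ℤ) - 1) :=
        mul_le_mul hcle hd₃' (by linarith only [hd3Z]) (by linarith only [hgZ])
      have hB1 : (c:ℤ) * d₃ * ((d₂:ℤ) + (g:ℤ) - 1) ≤ 4 * (g:ℤ)^3 := by
        have h11 := mul_le_mul hcd3'
          (show (d₂:ℤ) + (g:ℤ) - 1 ≤ 2 * ((g:ℤ) - 1) by linarith only [hd₂'])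
          (by linarith only [hd2Z, hgZ])
          (mul_nonneg (by linarith only [hgZ]) (by linarith only [hgZ]))
        linarith only [h11, hnum2]
      have hB2 : (c:ℤ) * d₃ * ((d₂:ℤ) + (g:ℤ) - 1) * Q ≤ 4 * (g:ℤ)^3 * Q :=
        mul_le_mul_of_nonneg_right hB1 (by linarith only [hQ1])
      have hfd21 : (1:ℤ) ≤ f * d₂ := by
        have h0 := mul_le_mul hf1 hd2Z zero_le_one (by linarith only [hf1])
        linarith only [h0]
      have hfd2P : P ≤ f * d₂ * P := le_mul_of_one_le_left (by linarith only [hP9]) hfd21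
      have hSge : -(4 * (g:ℤ)^3) ≤ S := (abs_le.mp hSabs).1
      have hg5 : 9 * (g:ℤ)^3 * Q ≤ (g:ℤ)^(k+5) := by
        have h5 : (g:ℤ)^(k+5) = ((g:ℤ)^2 * (g:ℤ)^3) * Q := by rw [hQdef]; ring
        have h6 : 9 * (g:ℤ)^3 ≤ (g:ℤ)^2 * (g:ℤ)^3 :=
          mul_le_mul_of_nonneg_right (numeric4 (g:ℤ) hgZ) (by positivity)
        have h7 : (9 * (g:ℤ)^3) * Q ≤ ((g:ℤ)^2 * (g:ℤ)^3) * Q :=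
          mul_le_mul_of_nonneg_right h6 (by linarith only [hQ1])
        linarith only [h5.ge, h5.le, h7]
      have h4g3Q : 4 * (g:ℤ)^3 ≤ 4 * (g:ℤ)^3 * Q :=
        le_mul_of_one_le_right (by positivity) hQ1
      have hPbound : P < (g:ℤ)^(k+5) := by
        have hpos : (0:ℤ) < (g:ℤ)^3 * Q := by positivity
        linarith only [hfd2P, hSe, hB2, hSge, hg5, h4g3Q, hpos]
      have := (pow_lt_pow_iff_right₀ (show (1:ℤ) < g by linarith only [hgZ])).mp hPbound
      omega
    omega
end

section
/- Let g ≥ 2 be an integer and suppose positive integers a > b > c, digits d₂, d₃ ∈ {1,…,g−1} and integers n₂, n₃ ≥ 2 with n₂ ≤ n₃ satisfy ab+1 = d₃(g^{n₃}−1)/(g−1) and ac+1 = d₂(g^{n₂}−1)/(g−1). Then g^{n₃−n₂} < (g−1)·b. -/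
theorem stmt_13 (g a b c d₂ d₃ n₂ n₃ : ℕ) (hg : 2 ≤ g)
    (hc : 0 < c) (hcb : c < b) (hba : b < a)
    (hd₂ : 1 ≤ d₂) (hd₂' : d₂ ≤ g - 1) (hd₃ : 1 ≤ d₃) (hd₃' : d₃ ≤ g - 1)
    (hn₂ : 2 ≤ n₂) (hn₃ : 2 ≤ n₃) (hn₂₃ : n₂ ≤ n₃)
    (hab : (a * b + 1) * (g - 1) = d₃ * (g ^ n₃ - 1))
    (hac : (a * c + 1) * (g - 1) = d₂ * (g ^ n₂ - 1)) :
    g ^ (n₃ - n₂) < (g - 1) * b := by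
  obtain ⟨e, rfl⟩ : ∃ e, g = e + 1 := ⟨g - 1, by omega⟩
  have he : 1 ≤ e := by omega
  simp only [Nat.add_sub_cancel] at *
  have hgn3 : 1 ≤ (e + 1) ^ n₃ := Nat.one_le_pow _ _ (by omega)
  have hgn2 : 1 ≤ (e + 1) ^ n₂ := Nat.one_le_pow _ _ (by omega)
  have h1 : (e + 1) ^ n₃ ≤ (a * b + 1) * e + 1 := by
    have h := hab
    have h2 : (e + 1) ^ n₃ - 1 ≤ d₃ * ((e + 1) ^ n₃ - 1) :=
      Nat.le_mul_of_pos_left _ (by omega)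
    omega
  have h2 : a * c + 2 ≤ (e + 1) ^ n₂ := by
    have h3 : (a * c + 1) * e ≤ ((e + 1) ^ n₂ - 1) * e := by
      rw [hac]
      calc d₂ * ((e + 1) ^ n₂ - 1) ≤ e * ((e + 1) ^ n₂ - 1) :=
            Nat.mul_le_mul_right _ hd₂'
        _ = ((e + 1) ^ n₂ - 1) * e := Nat.mul_comm _ _
    have h4 : a * c + 1 ≤ (e + 1) ^ n₂ - 1 :=
      Nat.le_of_mul_le_mul_right h3 (by omega)
    omega
  by_contra h
  push_neg at h
  have hpow : (e + 1) ^ (n₃ - n₂) * (e + 1) ^ n₂ = (e + 1) ^ n₃ := by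
    rw [← pow_add]; congr 1; omega
  have hkey : e * b * (a * c + 2) ≤ (e + 1) ^ n₃ := by
    calc e * b * (a * c + 2) ≤ (e + 1) ^ (n₃ - n₂) * (e + 1) ^ n₂ :=
          Nat.mul_le_mul h h2
      _ = (e + 1) ^ n₃ := hpow
  have hb2 : 2 ≤ b := by omega
  nlinarith [hkey, h1, he, hb2, hc, (by omega : 1 ≤ a)]
end
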